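/- arXiv:1712.06055 — 9 statements merged into one kernel-verified Lean document; each statement's English description precedes it below -/
import Mathlib

section
/- Let m ≥ 2 be an integer and let (x, y, φ) be a smooth solution of the system (xdd) on an open interval I of the real variable t. Then the function t ↦ e^{x(t)}·[2ẋφ̇ − (2m−1)φẋ² + φẏ² + 2(y−1)e^{y−x} − φ + 2m] is constant on I (i.e., the left-hand side of equation (int) multiplied by e^x is a first integral of the system (xdd)). -/
/-- For a smooth solution (x, y, φ) of the system (xdd) on an open
interval (A, B), the function e^x · (left-hand side of (int)) is constant there. -/
theorem stmt_0 (m : ℕ) (hm : 2 ≤ m) (A B : ℝ) (hAB : A < B)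
    (x y φ : ℝ → ℝ)
    (hx : ContDiffOn ℝ (⊤ : ℕ∞) x (Set.Ioo A B))
    (hy : ContDiffOn ℝ (⊤ : ℕ∞) y (Set.Ioo A B))
    (hφ : ContDiffOn ℝ (⊤ : ℕ∞) φ (Set.Ioo A B))
    (hxdd₁ : ∀ t ∈ Set.Ioo A B,
      2 * deriv (deriv x) t = (deriv y t) ^ 2 - (deriv x t) ^ 2 + 1)
    (hxdd₂ : ∀ t ∈ Set.Ioo A B,
      φ t * deriv (deriv y) t
        = ((m : ℝ) - 1) * φ t * deriv x t * deriv y t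
          - deriv φ t * deriv y t - y t * Real.exp (y t - x t))
    (hxdd₃ : ∀ t ∈ Set.Ioo A B,
      deriv (deriv φ) t
        = ((m : ℝ) - 1) * deriv x t * deriv φ t + (m : ℝ) * φ t - (m : ℝ)) :
    ∃ c : ℝ, ∀ t ∈ Set.Ioo A B,
      Real.exp (x t) *
        (2 * deriv x t * deriv φ t
          - (2 * (m : ℝ) - 1) * φ t * (deriv x t) ^ 2
          + φ t * (deriv y t) ^ 2
          + 2 * (y t - 1) * Real.exp (y t - x t)
          - φ t + 2 * (m : ℝ)) = c := by
  set s : Set ℝ := Set.Ioo A B with hs_def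
  have hs : IsOpen s := isOpen_Ioo
  have hconv : Convex ℝ s := convex_Ioo A B
  set F : ℝ → ℝ := fun t =>
    Real.exp (x t) *
      (2 * deriv x t * deriv φ t
        - (2 * (m : ℝ) - 1) * φ t * (deriv x t) ^ 2
        + φ t * (deriv y t) ^ 2
        + 2 * (y t - 1) * Real.exp (y t - x t)
        - φ t + 2 * (m : ℝ)) with hF_def
  -- derivatives are ContDiffOn
  have hx1 : ContDiffOn ℝ (⊤ : ℕ∞) (deriv x) s := hx.deriv_of_isOpen hs (by simp)
  have hy1 : ContDiffOn ℝ (⊤ : ℕ∞) (deriv y) s := hy.deriv_of_isOpen hs (by simp)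
  have hφ1 : ContDiffOn ℝ (⊤ : ℕ∞) (deriv φ) s := hφ.deriv_of_isOpen hs (by simp)
  -- at each point, everything has a derivative
  have key : ∀ t ∈ s, HasDerivAt F 0 t := by
    intro t ht
    have hxt : HasDerivAt x (deriv x t) t :=
      ((hx.differentiableOn (by simp)).differentiableAt (hs.mem_nhds ht)).hasDerivAt
    have hyt : HasDerivAt y (deriv y t) t :=
      ((hy.differentiableOn (by simp)).differentiableAt (hs.mem_nhds ht)).hasDerivAt
    have hφt : HasDerivAt φ (deriv φ t) t :=
      ((hφ.differentiableOn (by simp)).differentiableAt (hs.mem_nhds ht)).hasDerivAt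
    have hx1t : HasDerivAt (deriv x) (deriv (deriv x) t) t :=
      ((hx1.differentiableOn (by simp)).differentiableAt (hs.mem_nhds ht)).hasDerivAt
    have hy1t : HasDerivAt (deriv y) (deriv (deriv y) t) t :=
      ((hy1.differentiableOn (by simp)).differentiableAt (hs.mem_nhds ht)).hasDerivAt
    have hφ1t : HasDerivAt (deriv φ) (deriv (deriv φ) t) t :=
      ((hφ1.differentiableOn (by simp)).differentiableAt (hs.mem_nhds ht)).hasDerivAt
    have hext : HasDerivAt (fun t => Real.exp (x t)) (Real.exp (x t) * deriv x t) t :=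
      hxt.exp
    have heyxt : HasDerivAt (fun t => Real.exp (y t - x t))
        (Real.exp (y t - x t) * (deriv y t - deriv x t)) t := (hyt.sub hxt).exp
    have hG : HasDerivAt (fun t =>
        2 * deriv x t * deriv φ t
          - (2 * (m : ℝ) - 1) * φ t * (deriv x t) ^ 2
          + φ t * (deriv y t) ^ 2
          + 2 * (y t - 1) * Real.exp (y t - x t)
          - φ t + 2 * (m : ℝ))
        ((2 * deriv (deriv x) t) * deriv φ t + 2 * deriv x t * deriv (deriv φ) t
          - ((2 * (m : ℝ) - 1) * deriv φ t * (deriv x t) ^ 2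
             + (2 * (m : ℝ) - 1) * φ t * (2 * deriv x t * deriv (deriv x) t))
          + (deriv φ t * (deriv y t) ^ 2 + φ t * (2 * deriv y t * deriv (deriv y) t))
          + (2 * deriv y t * Real.exp (y t - x t)
             + 2 * (y t - 1) * (Real.exp (y t - x t) * (deriv y t - deriv x t)))
          - deriv φ t + 0) t := by
      have h1 : HasDerivAt (fun t => 2 * deriv x t * deriv φ t)
          ((2 * deriv (deriv x) t) * deriv φ t + 2 * deriv x t * deriv (deriv φ) t) t :=
        ((hx1t.const_mul 2).mul hφ1t)
      have h2 : HasDerivAt (fun t => (2 * (m : ℝ) - 1) * φ t * (deriv x t) ^ 2)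
          ((2 * (m : ℝ) - 1) * deriv φ t * (deriv x t) ^ 2
            + (2 * (m : ℝ) - 1) * φ t * (2 * deriv x t * deriv (deriv x) t)) t := by
        have := ((hφt.const_mul (2 * (m : ℝ) - 1)).mul
          ((hx1t.pow 2)))
        exact this.congr_deriv (by norm_num [Pi.pow_apply] <;> ring)
      have h3 : HasDerivAt (fun t => φ t * (deriv y t) ^ 2)
          (deriv φ t * (deriv y t) ^ 2 + φ t * (2 * deriv y t * deriv (deriv y) t)) t := by
        have := hφt.mul (hy1t.pow 2)
        exact this.congr_deriv (by norm_num [Pi.pow_apply] <;> ring)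
      have h4 : HasDerivAt (fun t => 2 * (y t - 1) * Real.exp (y t - x t))
          (2 * deriv y t * Real.exp (y t - x t)
            + 2 * (y t - 1) * (Real.exp (y t - x t) * (deriv y t - deriv x t))) t := by
        have := (((hyt.sub_const 1).const_mul 2).mul heyxt)
        exact this.congr_deriv (by norm_num [Pi.pow_apply] <;> ring)
      have h5 := ((((h1.sub h2).add h3).add h4).sub hφt).add_const (2 * (m : ℝ))
      exact h5.congr_deriv (by norm_num [Pi.pow_apply] <;> ring)
    have hF' : HasDerivAt F
        (Real.exp (x t) * deriv x t *
          (2 * deriv x t * deriv φ t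
            - (2 * (m : ℝ) - 1) * φ t * (deriv x t) ^ 2
            + φ t * (deriv y t) ^ 2
            + 2 * (y t - 1) * Real.exp (y t - x t)
            - φ t + 2 * (m : ℝ))
          + Real.exp (x t) *
            ((2 * deriv (deriv x) t) * deriv φ t + 2 * deriv x t * deriv (deriv φ) t
              - ((2 * (m : ℝ) - 1) * deriv φ t * (deriv x t) ^ 2
                 + (2 * (m : ℝ) - 1) * φ t * (2 * deriv x t * deriv (deriv x) t))
              + (deriv φ t * (deriv y t) ^ 2 + φ t * (2 * deriv y t * deriv (deriv y) t))
              + (2 * deriv y t * Real.exp (y t - x t)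
                 + 2 * (y t - 1) * (Real.exp (y t - x t) * (deriv y t - deriv x t)))
              - deriv φ t + 0)) t := hext.mul hG
    have hzero : (Real.exp (x t) * deriv x t *
          (2 * deriv x t * deriv φ t
            - (2 * (m : ℝ) - 1) * φ t * (deriv x t) ^ 2
            + φ t * (deriv y t) ^ 2
            + 2 * (y t - 1) * Real.exp (y t - x t)
            - φ t + 2 * (m : ℝ))
          + Real.exp (x t) *
            ((2 * deriv (deriv x) t) * deriv φ t + 2 * deriv x t * deriv (deriv φ) t
              - ((2 * (m : ℝ) - 1) * deriv φ t * (deriv x t) ^ 2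
                 + (2 * (m : ℝ) - 1) * φ t * (2 * deriv x t * deriv (deriv x) t))
              + (deriv φ t * (deriv y t) ^ 2 + φ t * (2 * deriv y t * deriv (deriv y) t))
              + (2 * deriv y t * Real.exp (y t - x t)
                 + 2 * (y t - 1) * (Real.exp (y t - x t) * (deriv y t - deriv x t)))
              - deriv φ t + 0)) = 0 := by
      have e1 := hxdd₁ t ht
      have e2 := hxdd₂ t ht
      have e3 := hxdd₃ t ht
      linear_combination
        Real.exp (x t) * (deriv φ t - (2 * (m : ℝ) - 1) * φ t * deriv x t) * e1
        + Real.exp (x t) * (2 * deriv y t) * e2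
        + Real.exp (x t) * (2 * deriv x t) * e3
    rw [← hzero]
    exact hF'
  -- constancy on the convex set
  have hmid : (A + B) / 2 ∈ s := Set.mem_Ioo.mpr ⟨by linarith, by linarith⟩
  refine ⟨F ((A + B) / 2), fun t ht => ?_⟩
  have hdiff : DifferentiableOn ℝ F s := fun u hu =>
    ((key u hu).differentiableAt).differentiableWithinAt
  have hfd : ∀ u ∈ s, fderivWithin ℝ F s u = 0 := by
    intro u hu
    have h1 : fderivWithin ℝ F s u = fderiv ℝ F u := fderivWithin_of_isOpen hs hu
    have h2 : fderiv ℝ F u = ContinuousLinearMap.smulRight (1 : ℝ →L[ℝ] ℝ) 0 :=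
      (key u hu).hasFDerivAt.fderiv
    rw [h1, h2]
    ext v
    simp
  exact hconv.is_const_of_fderivWithin_eq_zero hdiff hfd ht hmid
end

section
/- Let m ≥ 2 be an integer and let (x, y, φ) be a smooth solution of the system (xdd) together with equation (int) on an open interval I, and set σ(t) = e^{(x(t)−y(t)+t)/2}. If σ̈ = σ̇ on I, then there exist constants q₀, q₁, at least one of which is positive, such that σ(t) = q₀ + q₁·e^t for all t ∈ I; moreover, the identities (eta.i): ẏ·φ̇ = (m·ẋ − ẏ)·ẏ·φ − y·e^{y−x} and (eta.ii): ÿ = (ẏ − ẋ)·ẏ hold on all of I. -/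
/-- If a function has derivative zero on an open interval, it is constant there. -/
lemma const_of_hasDerivAt_zero {A B : ℝ} {h : ℝ → ℝ}
    (hd : ∀ t ∈ Set.Ioo A B, HasDerivAt h 0 t) :
    ∀ s ∈ Set.Ioo A B, ∀ t ∈ Set.Ioo A B, h s = h t := by
  intro s hs t ht
  refine (convex_Ioo A B).is_const_of_fderivWithin_eq_zero
    (fun u hu => ((hd u hu).differentiableAt).differentiableWithinAt) ?_ hs ht
  intro u hu
  rw [fderivWithin_of_isOpen isOpen_Ioo hu]
  have := ((hd u hu).hasFDerivAt).fderiv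
  rw [this]; ext; simp

/-- if a solution of (xdd) -- (int) on an open interval satisfies
σ̈ = σ̇ for σ = e^{(x−y+t)/2}, then σ = q₀ + q₁e^t with q₀ or q₁ positive, and
the identities (eta.i) and (eta.ii) hold. -/
theorem stmt_3 (m : ℕ) (hm : 2 ≤ m) (A B : ℝ) (hAB : A < B)
    (x y φ : ℝ → ℝ)
    (hx : ContDiffOn ℝ (⊤ : ℕ∞) x (Set.Ioo A B))
    (hy : ContDiffOn ℝ (⊤ : ℕ∞) y (Set.Ioo A B))
    (hφ : ContDiffOn ℝ (⊤ : ℕ∞) φ (Set.Ioo A B))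
    (hxdd₁ : ∀ t ∈ Set.Ioo A B,
      2 * deriv (deriv x) t = (deriv y t) ^ 2 - (deriv x t) ^ 2 + 1)
    (hxdd₂ : ∀ t ∈ Set.Ioo A B,
      φ t * deriv (deriv y) t
        = ((m : ℝ) - 1) * φ t * deriv x t * deriv y t
          - deriv φ t * deriv y t - y t * Real.exp (y t - x t))
    (hxdd₃ : ∀ t ∈ Set.Ioo A B,
      deriv (deriv φ) t
        = ((m : ℝ) - 1) * deriv x t * deriv φ t + (m : ℝ) * φ t - (m : ℝ))
    (hint : ∀ t ∈ Set.Ioo A B,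
      2 * deriv x t * deriv φ t
        - (2 * (m : ℝ) - 1) * φ t * (deriv x t) ^ 2
        + φ t * (deriv y t) ^ 2
        + 2 * (y t - 1) * Real.exp (y t - x t)
        - φ t + 2 * (m : ℝ) = 0)
    (hσ : ∀ t ∈ Set.Ioo A B,
      deriv (deriv (fun s => Real.exp ((x s - y s + s) / 2))) t
        = deriv (fun s => Real.exp ((x s - y s + s) / 2)) t) :
    (∃ q₀ q₁ : ℝ, (0 < q₀ ∨ 0 < q₁) ∧
      ∀ t ∈ Set.Ioo A B,
        Real.exp ((x t - y t + t) / 2) = q₀ + q₁ * Real.exp t) ∧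
    (∀ t ∈ Set.Ioo A B,
      deriv y t * deriv φ t
        = ((m : ℝ) * deriv x t - deriv y t) * deriv y t * φ t
          - y t * Real.exp (y t - x t)) ∧
    (∀ t ∈ Set.Ioo A B,
      deriv (deriv y) t = (deriv y t - deriv x t) * deriv y t) := by
  set I := Set.Ioo A B with hI
  have hIopen : IsOpen I := isOpen_Ioo
  set f : ℝ → ℝ := fun s => Real.exp ((x s - y s + s) / 2) with hf
  -- differentiability facts
  have hdx : ∀ t ∈ I, DifferentiableAt ℝ x t := fun t ht =>
    (hx.differentiableOn (by simp)).differentiableAt (hIopen.mem_nhds ht)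
  have hdy : ∀ t ∈ I, DifferentiableAt ℝ y t := fun t ht =>
    (hy.differentiableOn (by simp)).differentiableAt (hIopen.mem_nhds ht)
  have hx' : ContDiffOn ℝ (⊤ : ℕ∞) (deriv x) I := hx.deriv_of_isOpen hIopen (by simp)
  have hy' : ContDiffOn ℝ (⊤ : ℕ∞) (deriv y) I := hy.deriv_of_isOpen hIopen (by simp)
  have hdx' : ∀ t ∈ I, DifferentiableAt ℝ (deriv x) t := fun t ht =>
    (hx'.differentiableOn (by simp)).differentiableAt (hIopen.mem_nhds ht)
  have hdy' : ∀ t ∈ I, DifferentiableAt ℝ (deriv y) t := fun t ht =>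
    (hy'.differentiableOn (by simp)).differentiableAt (hIopen.mem_nhds ht)
  -- derivative of f
  have hDf : ∀ t ∈ I, HasDerivAt f
      (f t * ((deriv x t - deriv y t + 1) / 2)) t := by
    intro t ht
    have hu : HasDerivAt (fun s => (x s - y s + s) / 2)
        ((deriv x t - deriv y t + 1) / 2) t := by
      have := (((hdx t ht).hasDerivAt.sub (hdy t ht).hasDerivAt).add
        (hasDerivAt_id t)).div_const 2
      simpa using this
    simpa [hf] using hu.exp
  set g : ℝ → ℝ := fun s => f s * ((deriv x s - deriv y s + 1) / 2) with hg
  have hderivf : ∀ t ∈ I, deriv f t = g t := fun t ht => (hDf t ht).deriv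
  -- second derivative of f
  have hDg : ∀ t ∈ I, HasDerivAt g
      (g t * ((deriv x t - deriv y t + 1) / 2)
        + f t * ((deriv (deriv x) t - deriv (deriv y) t) / 2)) t := by
    intro t ht
    have h1 : HasDerivAt (fun s => (deriv x s - deriv y s + 1) / 2)
        ((deriv (deriv x) t - deriv (deriv y) t) / 2) t := by
      have := (((hdx' t ht).hasDerivAt.sub (hdy' t ht).hasDerivAt).add_const 1).div_const 2
      simpa using this
    have := (hDf t ht).mul h1
    exact this
  have hDf2 : ∀ t ∈ I, deriv (deriv f) t
      = g t * ((deriv x t - deriv y t + 1) / 2)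
        + f t * ((deriv (deriv x) t - deriv (deriv y) t) / 2) := by
    intro t ht
    have hev : deriv f =ᶠ[nhds t] g := by
      filter_upwards [hIopen.mem_nhds ht] with s hs using hderivf s hs
    rw [hev.deriv_eq]
    exact (hDg t ht).deriv
  have hfpos : ∀ t, 0 < f t := fun t => Real.exp_pos _
  -- the key scalar equation from hσ
  have hkey : ∀ t ∈ I,
      ((deriv x t - deriv y t + 1) / 2) ^ 2
        + (deriv (deriv x) t - deriv (deriv y) t) / 2
        = (deriv x t - deriv y t + 1) / 2 := by
    intro t ht
    have h0 := hσ t ht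
    rw [hDf2 t ht, hderivf t ht] at h0
    have h1 : f t * (((deriv x t - deriv y t + 1) / 2) ^ 2
        + (deriv (deriv x) t - deriv (deriv y) t) / 2)
        = f t * ((deriv x t - deriv y t + 1) / 2) := by
      simp only [hg] at h0
      linear_combination h0
    exact mul_left_cancel₀ (ne_of_gt (hfpos t)) h1
  -- eta.ii
  have hetaii : ∀ t ∈ I,
      deriv (deriv y) t = (deriv y t - deriv x t) * deriv y t := by
    intro t ht
    have h1 := hxdd₁ t ht
    have h2 := hkey t ht
    nlinarith [h1, h2]
  refine ⟨?_, ?_, hetaii⟩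
  · -- σ = q₀ + q₁ e^t
    set t₀ : ℝ := (A + B) / 2 with ht₀def
    have ht₀ : t₀ ∈ I := ⟨by simp [ht₀def]; linarith, by simp [ht₀def]; linarith⟩
    set q₁ : ℝ := g t₀ * Real.exp (-t₀) with hq₁
    -- h₁ := g * exp(-t) is constant
    have hconst1 : ∀ t ∈ I, g t * Real.exp (-t) = q₁ := by
      have hzero : ∀ t ∈ I, HasDerivAt (fun s => g s * Real.exp (-s)) 0 t := by
        intro t ht
        have hge : HasDerivAt (fun s : ℝ => Real.exp (-s)) (-Real.exp (-t)) t := by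
          simpa using ((hasDerivAt_id t).neg).exp
        have := (hDg t ht).mul hge
        have hG : g t * ((deriv x t - deriv y t + 1) / 2)
            + f t * ((deriv (deriv x) t - deriv (deriv y) t) / 2) = g t := by
          have h0 := hσ t ht
          rwa [hDf2 t ht, hderivf t ht] at h0
        refine this.congr_deriv ?_
        rw [hG]; ring
      intro t ht
      exact const_of_hasDerivAt_zero hzero t ht t₀ ht₀
    -- f - q₁ e^t is constant
    have hzero2 : ∀ t ∈ I, HasDerivAt (fun s => f s - q₁ * Real.exp s) 0 t := by
      intro t ht
      have := (hDf t ht).sub ((Real.hasDerivAt_exp t).const_mul q₁)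
      have hgt : g t = q₁ * Real.exp t := by
        have := hconst1 t ht
        have hexp : Real.exp (-t) * Real.exp t = 1 := by
          rw [← Real.exp_add]; simp
        calc g t = g t * Real.exp (-t) * Real.exp t := by
              rw [mul_assoc, hexp, mul_one]
          _ = q₁ * Real.exp t := by rw [hconst1 t ht]
      refine this.congr_deriv ?_
      have hgt' : f t * ((deriv x t - deriv y t + 1) / 2) = g t := rfl
      rw [hgt', hgt]; ring
    set q₀ : ℝ := f t₀ - q₁ * Real.exp t₀ with hq₀
    have hconst2 : ∀ t ∈ I, f t - q₁ * Real.exp t = q₀ := fun t ht =>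
      const_of_hasDerivAt_zero hzero2 t ht t₀ ht₀
    refine ⟨q₀, q₁, ?_, fun t ht => by have := hconst2 t ht; simp [hf] at this ⊢; linarith⟩
    by_contra hcon
    push_neg at hcon
    have h1 : f t₀ ≤ 0 := by
      have := hconst2 t₀ ht₀
      nlinarith [Real.exp_pos t₀, hcon.1, hcon.2]
    exact absurd h1 (not_le.mpr (hfpos t₀))
  · -- eta.i
    intro t ht
    have h2 := hxdd₂ t ht
    rw [hetaii t ht] at h2
    nlinarith [h2]
end

section
/- Let m ≥ 2 be an integer and let (x, y, φ) be a smooth solution of the system (xdd) together with equation (int) on an open interval I, and set σ(t) = e^{(x(t)−y(t)+t)/2}. If σ̈ = σ̇ on I, so that σ(t) = q₀ + q₁·e^t for constants q₀, q₁, then one of the following three cases occurs: (i) y = 0 identically on I; (ii) q₁ = 0, so that σ is a positive constant q₀; (iii) q₀ = 0 < q₁, so that σ(t) = q₁·e^t. -/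
/-- if a solution of (xdd) -- (int) on an open interval satisfies
σ̈ = σ̇, so that σ = q₀ + q₁e^t, then either y ≡ 0, or q₁ = 0 (σ a positive
constant q₀), or q₀ = 0 < q₁ (σ = q₁e^t). -/
theorem stmt_4 (m : ℕ) (hm : 2 ≤ m) (A B : ℝ) (hAB : A < B)
    (x y φ : ℝ → ℝ)
    (hx : ContDiffOn ℝ (⊤ : ℕ∞) x (Set.Ioo A B))
    (hy : ContDiffOn ℝ (⊤ : ℕ∞) y (Set.Ioo A B))
    (hφ : ContDiffOn ℝ (⊤ : ℕ∞) φ (Set.Ioo A B))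
    (hxdd₁ : ∀ t ∈ Set.Ioo A B,
      2 * deriv (deriv x) t = (deriv y t) ^ 2 - (deriv x t) ^ 2 + 1)
    (hxdd₂ : ∀ t ∈ Set.Ioo A B,
      φ t * deriv (deriv y) t
        = ((m : ℝ) - 1) * φ t * deriv x t * deriv y t
          - deriv φ t * deriv y t - y t * Real.exp (y t - x t))
    (hxdd₃ : ∀ t ∈ Set.Ioo A B,
      deriv (deriv φ) t
        = ((m : ℝ) - 1) * deriv x t * deriv φ t + (m : ℝ) * φ t - (m : ℝ))
    (hint : ∀ t ∈ Set.Ioo A B,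
      2 * deriv x t * deriv φ t
        - (2 * (m : ℝ) - 1) * φ t * (deriv x t) ^ 2
        + φ t * (deriv y t) ^ 2
        + 2 * (y t - 1) * Real.exp (y t - x t)
        - φ t + 2 * (m : ℝ) = 0)
    (hσ : ∀ t ∈ Set.Ioo A B,
      deriv (deriv (fun s => Real.exp ((x s - y s + s) / 2))) t
        = deriv (fun s => Real.exp ((x s - y s + s) / 2)) t)
    (q₀ q₁ : ℝ)
    (hq : ∀ t ∈ Set.Ioo A B,
      Real.exp ((x t - y t + t) / 2) = q₀ + q₁ * Real.exp t) :
    (∀ t ∈ Set.Ioo A B, y t = 0) ∨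
    (q₁ = 0 ∧ 0 < q₀) ∨
    (q₀ = 0 ∧ 0 < q₁) := by
  have hIo : IsOpen (Set.Ioo A B) := isOpen_Ioo
  have htm : (A + B) / 2 ∈ Set.Ioo A B := ⟨by linarith, by linarith⟩
  have hS : ∀ t ∈ Set.Ioo A B, 0 < q₀ + q₁ * Real.exp t := by
    intro t ht
    rw [← hq t ht]
    exact Real.exp_pos _
  by_cases hq1 : q₁ = 0
  · refine Or.inr (Or.inl ⟨hq1, ?_⟩)
    have h := hS _ htm
    rw [hq1] at h
    simpa using h
  by_cases hq0 : q₀ = 0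
  · refine Or.inr (Or.inr ⟨hq0, ?_⟩)
    have h := hS _ htm
    rw [hq0] at h
    nlinarith [Real.exp_pos ((A + B) / 2)]
  left
  -- differentiability package
  have hdx : ∀ s ∈ Set.Ioo A B, HasDerivAt x (deriv x s) s := fun s hs =>
    ((hx.differentiableOn (by simp)).differentiableAt (hIo.mem_nhds hs)).hasDerivAt
  have hdy : ∀ s ∈ Set.Ioo A B, HasDerivAt y (deriv y s) s := fun s hs =>
    ((hy.differentiableOn (by simp)).differentiableAt (hIo.mem_nhds hs)).hasDerivAt
  have hdφ : ∀ s ∈ Set.Ioo A B, HasDerivAt φ (deriv φ s) s := fun s hs =>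
    ((hφ.differentiableOn (by simp)).differentiableAt (hIo.mem_nhds hs)).hasDerivAt
  have hX1 : ContDiffOn ℝ 1 (deriv x) (Set.Ioo A B) := hx.deriv_of_isOpen hIo (WithTop.coe_le_coe.mpr le_top)
  have hY1 : ContDiffOn ℝ 1 (deriv y) (Set.Ioo A B) := hy.deriv_of_isOpen hIo (WithTop.coe_le_coe.mpr le_top)
  have hF1 : ContDiffOn ℝ 1 (deriv φ) (Set.Ioo A B) := hφ.deriv_of_isOpen hIo (WithTop.coe_le_coe.mpr le_top)
  have hdX : ∀ s ∈ Set.Ioo A B, HasDerivAt (deriv x) (deriv (deriv x) s) s := fun s hs =>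
    ((hX1.differentiableOn one_ne_zero).differentiableAt (hIo.mem_nhds hs)).hasDerivAt
  have hdv : ∀ s ∈ Set.Ioo A B, HasDerivAt (deriv y) (deriv (deriv y) s) s := fun s hs =>
    ((hY1.differentiableOn one_ne_zero).differentiableAt (hIo.mem_nhds hs)).hasDerivAt
  have hdg : ∀ s ∈ Set.Ioo A B, HasDerivAt (deriv φ) (deriv (deriv φ) s) s := fun s hs =>
    ((hF1.differentiableOn one_ne_zero).differentiableAt (hIo.mem_nhds hs)).hasDerivAt
  -- first derivative of hq
  have k1 : ∀ s ∈ Set.Ioo A B,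
      (deriv x s - deriv y s + 1) / 2 * (q₀ + q₁ * Real.exp s) = q₁ * Real.exp s := by
    intro s hs
    have hl : HasDerivAt (fun r => Real.exp ((x r - y r + r) / 2))
        (Real.exp ((x s - y s + s) / 2) * ((deriv x s - deriv y s + 1) / 2)) s :=
      ((((hdx s hs).sub (hdy s hs)).add (hasDerivAt_id s)).div_const 2).exp
    have hr : HasDerivAt (fun r => q₀ + q₁ * Real.exp r) (q₁ * Real.exp s) s :=
      (HasDerivAt.const_mul q₁ (Real.hasDerivAt_exp s)).const_add q₀
    have heq : deriv (fun r => Real.exp ((x r - y r + r) / 2)) s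
        = deriv (fun r => q₀ + q₁ * Real.exp r) s :=
      (Filter.eventuallyEq_of_mem (hIo.mem_nhds hs) fun r hr => hq r hr).deriv_eq
    have h2 : Real.exp ((x s - y s + s) / 2) * ((deriv x s - deriv y s + 1) / 2)
        = q₁ * Real.exp s := hl.deriv.symm.trans (heq.trans hr.deriv)
    rw [hq s hs] at h2
    linear_combination h2
  -- second derivative of hq
  have k2 : ∀ s ∈ Set.Ioo A B,
      (deriv (deriv x) s - deriv (deriv y) s) / 2 * (q₀ + q₁ * Real.exp s)
        + (deriv x s - deriv y s + 1) / 2 * (q₁ * Real.exp s) = q₁ * Real.exp s := by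
    intro s hs
    have hl : HasDerivAt (fun r => (deriv x r - deriv y r + 1) / 2 * (q₀ + q₁ * Real.exp r))
        ((deriv (deriv x) s - deriv (deriv y) s) / 2 * (q₀ + q₁ * Real.exp s)
          + (deriv x s - deriv y s + 1) / 2 * (q₁ * Real.exp s)) s :=
      ((((hdX s hs).sub (hdv s hs)).add_const 1).div_const 2).mul
        ((HasDerivAt.const_mul q₁ (Real.hasDerivAt_exp s)).const_add q₀)
    have hr : HasDerivAt (fun r => q₁ * Real.exp r) (q₁ * Real.exp s) s :=
      HasDerivAt.const_mul q₁ (Real.hasDerivAt_exp s)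
    have heq : deriv (fun r => (deriv x r - deriv y r + 1) / 2 * (q₀ + q₁ * Real.exp r)) s
        = deriv (fun r => q₁ * Real.exp r) s :=
      (Filter.eventuallyEq_of_mem (hIo.mem_nhds hs) fun r hr => k1 r hr).deriv_eq
    exact hl.deriv.symm.trans (heq.trans hr.deriv)
  -- P5 : ẍ - ÿ = (1 - (ẋ-ẏ)²)/2
  have hP5 : ∀ s ∈ Set.Ioo A B,
      deriv (deriv x) s - deriv (deriv y) s = (1 - (deriv x s - deriv y s) ^ 2) / 2 := by
    intro s hs
    have hSne : q₀ + q₁ * Real.exp s ≠ 0 := ne_of_gt (hS s hs)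
    have goal2 : (deriv (deriv x) s - deriv (deriv y) s) * (q₀ + q₁ * Real.exp s)
        = (1 - (deriv x s - deriv y s) ^ 2) / 2 * (q₀ + q₁ * Real.exp s) := by
      linear_combination 2 * (k2 s hs) + (deriv x s - deriv y s - 1) * (k1 s hs)
    exact mul_right_cancel₀ hSne goal2
  -- C1 : (mφẋ - φẏ - φ̇)ẏ = y e^{y-x}
  have hC1 : ∀ s ∈ Set.Ioo A B,
      ((m : ℝ) * φ s * deriv x s - φ s * deriv y s - deriv φ s) * deriv y s
        - y s * Real.exp (y s - x s) = 0 := by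
    intro s hs
    linear_combination (φ s / 2) * (hxdd₁ s hs) - (hxdd₂ s hs) - (φ s) * (hP5 s hs)
  -- W ≡ 0 : (m - e^{y-x})ẏ = (ẋ-ẏ)e^{y-x}y
  have hW : ∀ s ∈ Set.Ioo A B,
      ((m : ℝ) - Real.exp (y s - x s)) * deriv y s
        - (deriv x s - deriv y s) * Real.exp (y s - x s) * y s = 0 := by
    intro s hs
    have hLs : HasDerivAt (fun r => Real.exp (y r - x r))
        (Real.exp (y s - x s) * (deriv y s - deriv x s)) s :=
      ((hdy s hs).sub (hdx s hs)).exp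
    have hDer : HasDerivAt (fun r =>
          ((m : ℝ) * φ r * deriv x r - φ r * deriv y r - deriv φ r) * deriv y r
            - y r * Real.exp (y r - x r))
        (((m : ℝ) * deriv φ s * deriv x s + (m : ℝ) * φ s * deriv (deriv x) s
            - (deriv φ s * deriv y s + φ s * deriv (deriv y) s)
            - deriv (deriv φ) s) * deriv y s
          + ((m : ℝ) * φ s * deriv x s - φ s * deriv y s - deriv φ s) * deriv (deriv y) s
          - (deriv y s * Real.exp (y s - x s)
              + y s * (Real.exp (y s - x s) * (deriv y s - deriv x s)))) s :=
      ((((HasDerivAt.const_mul (m : ℝ) (hdφ s hs)).mul (hdX s hs)).sub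
          ((hdφ s hs).mul (hdv s hs))).sub (hdg s hs)).mul (hdv s hs) |>.sub
        ((hdy s hs).mul hLs)
    have h0 : deriv (fun r =>
          ((m : ℝ) * φ r * deriv x r - φ r * deriv y r - deriv φ r) * deriv y r
            - y r * Real.exp (y r - x r)) s = 0 := by
      have heq : (fun r =>
            ((m : ℝ) * φ r * deriv x r - φ r * deriv y r - deriv φ r) * deriv y r
              - y r * Real.exp (y r - x r)) =ᶠ[nhds s] (fun _ => (0 : ℝ)) :=
        Filter.eventuallyEq_of_mem (hIo.mem_nhds hs) fun r hr => hC1 r hr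
      rw [heq.deriv_eq]
      exact deriv_const s 0
    have hE6 : ((m : ℝ) * deriv φ s * deriv x s + (m : ℝ) * φ s * deriv (deriv x) s
            - (deriv φ s * deriv y s + φ s * deriv (deriv y) s)
            - deriv (deriv φ) s) * deriv y s
          + ((m : ℝ) * φ s * deriv x s - φ s * deriv y s - deriv φ s) * deriv (deriv y) s
          - (deriv y s * Real.exp (y s - x s)
              + y s * (Real.exp (y s - x s) * (deriv y s - deriv x s))) = 0 :=
      hDer.deriv.symm.trans h0
    have hm1 : ((m : ℝ) - 1) ≠ 0 := by
      have : (2 : ℝ) ≤ (m : ℝ) := by exact_mod_cast hm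
      linarith
    have key : ((m : ℝ) - 1) * (((m : ℝ) - Real.exp (y s - x s)) * deriv y s
        - (deriv x s - deriv y s) * Real.exp (y s - x s) * y s) = 0 := by
      linear_combination
        (-(deriv φ s) / 2 - φ s * deriv x s + φ s * deriv x s * (m : ℝ)
            + deriv y s * φ s * (m : ℝ) / 2) * (hxdd₁ s hs)
        + (-(deriv y s)) * (hxdd₃ s hs)
        + (2 * deriv x s - deriv x s * (m : ℝ) - 2 * deriv y s) * (hxdd₂ s hs)
        + (deriv y s * (m : ℝ) / 2) * (hint s hs)
        + (deriv φ s + 2 * φ s * deriv x s - 2 * φ s * deriv x s * (m : ℝ)) * (hP5 s hs)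
        - hE6
    rcases mul_eq_zero.1 key with h | h
    · exact absurd h hm1
    · exact h
  -- final step at a point t
  intro t ht
  have hLt : HasDerivAt (fun r => Real.exp (y r - x r))
      (Real.exp (y t - x t) * (deriv y t - deriv x t)) t :=
    ((hdy t ht).sub (hdx t ht)).exp
  have hDw : HasDerivAt (fun r =>
        ((m : ℝ) - Real.exp (y r - x r)) * deriv y r
          - (deriv x r - deriv y r) * Real.exp (y r - x r) * y r)
      (-(Real.exp (y t - x t) * (deriv y t - deriv x t)) * deriv y t
        + ((m : ℝ) - Real.exp (y t - x t)) * deriv (deriv y) t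
        - (((deriv (deriv x) t - deriv (deriv y) t) * Real.exp (y t - x t)
              + (deriv x t - deriv y t) * (Real.exp (y t - x t) * (deriv y t - deriv x t))) * y t
            + (deriv x t - deriv y t) * Real.exp (y t - x t) * deriv y t)) t :=
    ((hLt.const_sub (m : ℝ)).mul (hdv t ht)).sub
      ((((hdX t ht).sub (hdv t ht)).mul hLt).mul (hdy t ht))
  have h0 : deriv (fun r =>
        ((m : ℝ) - Real.exp (y r - x r)) * deriv y r
          - (deriv x r - deriv y r) * Real.exp (y r - x r) * y r) t = 0 := by
    have heq : (fun r =>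
          ((m : ℝ) - Real.exp (y r - x r)) * deriv y r
            - (deriv x r - deriv y r) * Real.exp (y r - x r) * y r)
        =ᶠ[nhds t] (fun _ => (0 : ℝ)) :=
      Filter.eventuallyEq_of_mem (hIo.mem_nhds ht) fun r hr => hW r hr
    rw [heq.deriv_eq]
    exact deriv_const t 0
  have hWd : -(Real.exp (y t - x t) * (deriv y t - deriv x t)) * deriv y t
        + ((m : ℝ) - Real.exp (y t - x t)) * deriv (deriv y) t
        - (((deriv (deriv x) t - deriv (deriv y) t) * Real.exp (y t - x t)
              + (deriv x t - deriv y t) * (Real.exp (y t - x t) * (deriv y t - deriv x t))) * y t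
            + (deriv x t - deriv y t) * Real.exp (y t - x t) * deriv y t) = 0 :=
    hDw.deriv.symm.trans h0
  have key2 : (1 - (deriv x t - deriv y t) ^ 2) * Real.exp (y t - x t) * y t = 0 := by
    linear_combination (-2 : ℝ) * hWd
      + (2 * deriv y t - 2 * deriv x t) * (hW t ht)
      + ((m : ℝ) - Real.exp (y t - x t)) * (hxdd₁ t ht)
      + (-2 * (m : ℝ) + 2 * Real.exp (y t - x t) - 2 * y t * Real.exp (y t - x t)) * (hP5 t ht)
  -- 1 - h² ≠ 0
  have l1 : (1 + (deriv x t - deriv y t)) * (q₀ + q₁ * Real.exp t) = 2 * (q₁ * Real.exp t) := by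
    linear_combination 2 * (k1 t ht)
  have l2 : (1 - (deriv x t - deriv y t)) * (q₀ + q₁ * Real.exp t) = 2 * q₀ := by
    linear_combination (-2 : ℝ) * (k1 t ht)
  have h4 : (1 - (deriv x t - deriv y t) ^ 2) * (q₀ + q₁ * Real.exp t) ^ 2
      = 4 * q₀ * (q₁ * Real.exp t) := by
    linear_combination ((1 + (deriv x t - deriv y t)) * (q₀ + q₁ * Real.exp t)) * l2
      + (2 * q₀) * l1
  have hrhs : 4 * q₀ * (q₁ * Real.exp t) ≠ 0 := by
    have he := Real.exp_ne_zero t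
    intro hcon
    rcases mul_eq_zero.1 hcon with h | h
    · rcases mul_eq_zero.1 h with h' | h'
      · norm_num at h'
      · exact hq0 h'
    · rcases mul_eq_zero.1 h with h' | h'
      · exact hq1 h'
      · exact he h'
  have hne : (1 - (deriv x t - deriv y t) ^ 2) ≠ 0 := by
    intro h0'
    apply hrhs
    rw [← h4, h0', zero_mul]
  have hLne : Real.exp (y t - x t) ≠ 0 := Real.exp_ne_zero _
  rcases mul_eq_zero.1 key2 with h | h
  · rcases mul_eq_zero.1 h with h' | h'
    · exact absurd h' hne
    · exact absurd h' hLne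
  · exact h
end

section
/- Let m ≥ 2 be an integer and let (x, y, φ) be a smooth solution of the system (xdd) together with equation (int) on an open interval I containing 0, such that y = 0 identically on I. Then the initial data satisfy y(0) = ẏ(0) = 0 and 2·ẋ(0)·φ̇(0) = [(2m−1)·ẋ(0)² + 1]·φ(0) + 2·e^{−x(0)} − 2m; moreover, the function Θ(t) = cosh(t/2) + ẋ(0)·sinh(t/2) is nonzero on I and x(t) = x(0) + 2·log|Θ(t)| for all t ∈ I, and φ satisfies the first-order linear equation (txf): 2ẋφ̇ = [(2m−1)ẋ² + 1]·φ + 2e^{−x} − 2m on I. -/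
lemma my_const_aux {A B : ℝ} {f : ℝ → ℝ} (hf : ∀ t ∈ Set.Ioo A B, HasDerivAt f 0 t)
    {a b : ℝ} (ha : a ∈ Set.Ioo A B) (hb : b ∈ Set.Ioo A B) : f a = f b := by
  refine (convex_Ioo A B).is_const_of_fderivWithin_eq_zero
    (fun t ht => (hf t ht).differentiableAt.differentiableWithinAt)
    (fun t ht => ?_) ha hb
  rw [fderivWithin_of_isOpen isOpen_Ioo ht, (hf t ht).hasFDerivAt.fderiv]
  ext z; simp

lemma my_xpart {A B : ℝ} (hA : A < 0) (hB : 0 < B) (x : ℝ → ℝ)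
    (hx : ContDiffOn ℝ (⊤ : ℕ∞) x (Set.Ioo A B))
    (hxdd : ∀ t ∈ Set.Ioo A B, 2 * deriv (deriv x) t = 1 - (deriv x t) ^ 2) :
    ∀ t ∈ Set.Ioo A B,
      Real.cosh (t / 2) + deriv x 0 * Real.sinh (t / 2) ≠ 0 ∧
      x t = x 0 + 2 * Real.log |Real.cosh (t / 2) + deriv x 0 * Real.sinh (t / 2)| := by
  have hI : IsOpen (Set.Ioo A B) := isOpen_Ioo
  have h0 : (0 : ℝ) ∈ Set.Ioo A B := ⟨hA, hB⟩
  have hxd : ∀ t ∈ Set.Ioo A B, DifferentiableAt ℝ x t := fun t ht =>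
    (hx.contDiffAt (hI.mem_nhds ht)).differentiableAt (by simp)
  have hdx : ContDiffOn ℝ (⊤ : ℕ∞) (deriv x) (Set.Ioo A B) := hx.deriv_of_isOpen hI (by simp)
  have hdxd : ∀ t ∈ Set.Ioo A B, DifferentiableAt ℝ (deriv x) t := fun t ht =>
    (hdx.contDiffAt (hI.mem_nhds ht)).differentiableAt (by simp)
  have hx'' : ∀ t ∈ Set.Ioo A B,
      HasDerivAt (deriv x) ((1 - (deriv x t) ^ 2) / 2) t := by
    intro t ht
    have h1 := (hdxd t ht).hasDerivAt
    have e : deriv (deriv x) t = (1 - (deriv x t) ^ 2) / 2 := by linarith [hxdd t ht]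
    rwa [e] at h1
  have hu : ∀ t ∈ Set.Ioo A B,
      HasDerivAt (fun s => Real.exp (x s / 2)) (Real.exp (x t / 2) * (deriv x t / 2)) t := by
    intro t ht
    exact (((hxd t ht).hasDerivAt).div_const 2).exp
  have hv : ∀ t ∈ Set.Ioo A B,
      HasDerivAt (fun s => Real.exp (x s / 2) * (deriv x s / 2)) (Real.exp (x t / 2) / 4) t := by
    intro t ht
    have h1 := (hu t ht).mul ((hx'' t ht).div_const 2)
    refine h1.congr_deriv ?_
    ring
  have hg : ∀ t ∈ Set.Ioo A B,
      HasDerivAt (fun s => (Real.exp (x s / 2) * (deriv x s / 2) - Real.exp (x s / 2) / 2)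
        * Real.exp (s / 2)) 0 t := by
    intro t ht
    have he : HasDerivAt (fun s : ℝ => Real.exp (s / 2)) (Real.exp (t / 2) * (1 / 2)) t := by
      simpa using ((hasDerivAt_id t).div_const 2).exp
    have h1 := ((hv t ht).sub ((hu t ht).div_const 2)).mul he
    refine h1.congr_deriv ?_
    simp only [Pi.add_apply, Pi.sub_apply]
    ring
  have hh : ∀ t ∈ Set.Ioo A B,
      HasDerivAt (fun s => (Real.exp (x s / 2) * (deriv x s / 2) + Real.exp (x s / 2) / 2)
        * Real.exp (-(s / 2))) 0 t := by
    intro t ht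
    have he : HasDerivAt (fun s : ℝ => Real.exp (-(s / 2))) (Real.exp (-(t / 2)) * (-(1 / 2))) t := by
      simpa using (((hasDerivAt_id t).div_const 2).neg).exp
    have h1 := ((hv t ht).add ((hu t ht).div_const 2)).mul he
    refine h1.congr_deriv ?_
    simp only [Pi.add_apply, Pi.sub_apply]
    ring
  have key : ∀ t ∈ Set.Ioo A B,
      Real.exp (x t / 2)
        = Real.exp (x 0 / 2) * (Real.cosh (t / 2) + deriv x 0 * Real.sinh (t / 2)) := by
    intro t ht
    have e1 := my_const_aux hg ht h0
    have e2 := my_const_aux hh ht h0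
    simp only [Real.exp_zero, neg_zero, zero_div, mul_one] at e1 e2
    have h12 : Real.exp (-(t / 2)) * Real.exp (t / 2) = 1 := by
      rw [← Real.exp_add]; simp
    have m1 : Real.exp (x t / 2) * (deriv x t / 2) - Real.exp (x t / 2) / 2
        = (Real.exp (x 0 / 2) * (deriv x 0 / 2) - Real.exp (x 0 / 2) / 2)
          * Real.exp (-(t / 2)) := by
      calc Real.exp (x t / 2) * (deriv x t / 2) - Real.exp (x t / 2) / 2
          = ((Real.exp (x t / 2) * (deriv x t / 2) - Real.exp (x t / 2) / 2)
              * Real.exp (t / 2)) * Real.exp (-(t / 2)) := by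
            rw [mul_assoc, mul_comm (Real.exp (t / 2)), h12, mul_one]
        _ = _ := by rw [e1]
    have m2 : Real.exp (x t / 2) * (deriv x t / 2) + Real.exp (x t / 2) / 2
        = (Real.exp (x 0 / 2) * (deriv x 0 / 2) + Real.exp (x 0 / 2) / 2)
          * Real.exp (t / 2) := by
      calc Real.exp (x t / 2) * (deriv x t / 2) + Real.exp (x t / 2) / 2
          = ((Real.exp (x t / 2) * (deriv x t / 2) + Real.exp (x t / 2) / 2)
              * Real.exp (-(t / 2))) * Real.exp (t / 2) := by
            rw [mul_assoc, h12, mul_one]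
        _ = _ := by rw [e2]
    have hu_eq : Real.exp (x t / 2)
        = (Real.exp (x 0 / 2) * (deriv x 0 / 2) + Real.exp (x 0 / 2) / 2) * Real.exp (t / 2)
          - (Real.exp (x 0 / 2) * (deriv x 0 / 2) - Real.exp (x 0 / 2) / 2)
            * Real.exp (-(t / 2)) := by linarith
    rw [hu_eq, Real.cosh_eq, Real.sinh_eq]
    ring
  intro t ht
  have k := key t ht
  have hΘ : 0 < Real.cosh (t / 2) + deriv x 0 * Real.sinh (t / 2) := by
    nlinarith [Real.exp_pos (x t / 2), Real.exp_pos (x 0 / 2)]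
  refine ⟨ne_of_gt hΘ, ?_⟩
  have hlog := congrArg Real.log k
  rw [Real.log_exp, Real.log_mul (Real.exp_ne_zero _) (ne_of_gt hΘ), Real.log_exp] at hlog
  rw [abs_of_pos hΘ]
  linarith

/-- for a solution of (xdd) -- (int) on an open interval
containing 0 with y ≡ 0, the initial data satisfy (war), x is given by
x(0) + 2 log|Θ| with Θ(t) = cosh(t/2) + ẋ(0) sinh(t/2) (which is nonzero on
the interval), and φ satisfies the linear equation (txf). -/
theorem stmt_5 (m : ℕ) (hm : 2 ≤ m) (A B : ℝ) (hA : A < 0) (hB : 0 < B)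
    (x y φ : ℝ → ℝ)
    (hx : ContDiffOn ℝ (⊤ : ℕ∞) x (Set.Ioo A B))
    (hy : ContDiffOn ℝ (⊤ : ℕ∞) y (Set.Ioo A B))
    (hφ : ContDiffOn ℝ (⊤ : ℕ∞) φ (Set.Ioo A B))
    (hxdd₁ : ∀ t ∈ Set.Ioo A B,
      2 * deriv (deriv x) t = (deriv y t) ^ 2 - (deriv x t) ^ 2 + 1)
    (hxdd₂ : ∀ t ∈ Set.Ioo A B,
      φ t * deriv (deriv y) t
        = ((m : ℝ) - 1) * φ t * deriv x t * deriv y t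
          - deriv φ t * deriv y t - y t * Real.exp (y t - x t))
    (hxdd₃ : ∀ t ∈ Set.Ioo A B,
      deriv (deriv φ) t
        = ((m : ℝ) - 1) * deriv x t * deriv φ t + (m : ℝ) * φ t - (m : ℝ))
    (hint : ∀ t ∈ Set.Ioo A B,
      2 * deriv x t * deriv φ t
        - (2 * (m : ℝ) - 1) * φ t * (deriv x t) ^ 2
        + φ t * (deriv y t) ^ 2
        + 2 * (y t - 1) * Real.exp (y t - x t)
        - φ t + 2 * (m : ℝ) = 0)
    (hy0 : ∀ t ∈ Set.Ioo A B, y t = 0) :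
    y 0 = 0 ∧ deriv y 0 = 0 ∧
    2 * deriv x 0 * deriv φ 0
      = ((2 * (m : ℝ) - 1) * (deriv x 0) ^ 2 + 1) * φ 0
        + 2 * Real.exp (-(x 0)) - 2 * (m : ℝ) ∧
    (∀ t ∈ Set.Ioo A B,
      Real.cosh (t / 2) + deriv x 0 * Real.sinh (t / 2) ≠ 0 ∧
      x t = x 0
        + 2 * Real.log |Real.cosh (t / 2) + deriv x 0 * Real.sinh (t / 2)|) ∧
    (∀ t ∈ Set.Ioo A B,
      2 * deriv x t * deriv φ t
        = ((2 * (m : ℝ) - 1) * (deriv x t) ^ 2 + 1) * φ t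
          + 2 * Real.exp (-(x t)) - 2 * (m : ℝ)) := by
  have hI : IsOpen (Set.Ioo A B) := isOpen_Ioo
  have h0 : (0 : ℝ) ∈ Set.Ioo A B := ⟨hA, hB⟩
  have hy' : ∀ t ∈ Set.Ioo A B, deriv y t = 0 := by
    intro t ht
    have h1 : y =ᶠ[nhds t] fun _ => 0 :=
      Filter.eventually_of_mem (hI.mem_nhds ht) hy0
    rw [h1.deriv_eq]
    simp
  have htxf : ∀ t ∈ Set.Ioo A B,
      2 * deriv x t * deriv φ t
        = ((2 * (m : ℝ) - 1) * (deriv x t) ^ 2 + 1) * φ t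
          + 2 * Real.exp (-(x t)) - 2 * (m : ℝ) := by
    intro t ht
    have h1 := hint t ht
    rw [hy0 t ht, hy' t ht] at h1
    simp only [zero_sub] at h1
    nlinarith [h1]
  refine ⟨hy0 0 h0, hy' 0 h0, htxf 0 h0, ?_, htxf⟩
  refine my_xpart hA hB x hx ?_
  intro t ht
  have h1 := hxdd₁ t ht
  rw [hy' t ht] at h1
  linarith [h1]
end

section
/- Let m ≥ 2 be an integer and let real numbers x₀, φ₀, a, d satisfy 2·a·d = [(2m−1)·a² + 1]·φ₀ + 2·e^{−x₀} − 2m. Let I be an open interval containing 0 on which Θ(t) = cosh(t/2) + a·sinh(t/2) is nonzero, and set x(t) = x₀ + 2·log|Θ(t)|, y = 0. Then there exists a unique smooth function φ : I → ℝ with φ(0) = φ₀ and φ̇(0) = d satisfying 2ẋφ̇ = [(2m−1)ẋ² + 1]·φ + 2e^{−x} − 2m on I, and for this φ the triple (x, y, φ) is a smooth solution of the system (xdd) together with equation (int) on I. -/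
/-- Θ(t) = cosh(t/2) + a·sinh(t/2). -/
noncomputable def Theta (a t : ℝ) : ℝ := Real.cosh (t / 2) + a * Real.sinh (t / 2)

/-- x(t) = x₀ + 2·log|Θ(t)|. -/
noncomputable def Xfun (x₀ a t : ℝ) : ℝ := x₀ + 2 * Real.log |Theta a t|

/-- The identically zero function (the function y of the statement). -/
def zeroFun : ℝ → ℝ := fun _ => 0


open Set Filter Topology Finset

noncomputable def uu (a t : ℝ) : ℝ := (Real.sinh (t / 2) + a * Real.cosh (t / 2)) / 2

lemma theta_hasDeriv (a t : ℝ) : HasDerivAt (Theta a) (uu a t) t := by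
  have h1 : HasDerivAt (fun t : ℝ => t / 2) (1 / 2) t := by
    simpa using (hasDerivAt_id t).div_const 2
  have hc : HasDerivAt (fun t : ℝ => Real.cosh (t / 2)) (Real.sinh (t / 2) * (1 / 2)) t :=
    by have := (Real.hasDerivAt_cosh (t / 2)).comp t h1; exact this
  have hs : HasDerivAt (fun t : ℝ => Real.sinh (t / 2)) (Real.cosh (t / 2) * (1 / 2)) t :=
    by have := (Real.hasDerivAt_sinh (t / 2)).comp t h1; exact this
  have := hc.add (hs.const_mul a)
  refine this.congr_deriv ?_
  unfold uu; ring

lemma uu_hasDeriv (a t : ℝ) : HasDerivAt (uu a) (Theta a t / 4) t := by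
  have h1 : HasDerivAt (fun t : ℝ => t / 2) (1 / 2) t := by
    simpa using (hasDerivAt_id t).div_const 2
  have hc : HasDerivAt (fun t : ℝ => Real.cosh (t / 2)) (Real.sinh (t / 2) * (1 / 2)) t :=
    by have := (Real.hasDerivAt_cosh (t / 2)).comp t h1; exact this
  have hs : HasDerivAt (fun t : ℝ => Real.sinh (t / 2)) (Real.cosh (t / 2) * (1 / 2)) t :=
    by have := (Real.hasDerivAt_sinh (t / 2)).comp t h1; exact this
  have := (hs.add (hc.const_mul a)).div_const 2
  refine this.congr_deriv ?_
  unfold Theta; ring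

lemma theta_zero (a : ℝ) : Theta a 0 = 1 := by simp [Theta]

lemma uu_zero (a : ℝ) : uu a 0 = a / 2 := by simp [uu]

lemma theta_sq (a t : ℝ) : Theta a t ^ 2 - 4 * uu a t ^ 2 = 1 - a ^ 2 := by
  have := Real.cosh_sq_sub_sinh_sq (t / 2)
  unfold Theta uu
  nlinarith [this]

lemma theta_contDiff (a : ℝ) {n : WithTop ℕ∞} : ContDiff ℝ n (Theta a) := by
  unfold Theta
  exact (Real.contDiff_cosh.comp (contDiff_id.div_const 2)).add
    (contDiff_const.mul (Real.contDiff_sinh.comp (contDiff_id.div_const 2)))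

lemma uu_contDiff (a : ℝ) {n : WithTop ℕ∞} : ContDiff ℝ n (uu a) := by
  unfold uu
  exact ((Real.contDiff_sinh.comp (contDiff_id.div_const 2)).add
    (contDiff_const.mul (Real.contDiff_cosh.comp (contDiff_id.div_const 2)))).div_const 2

lemma theta_pos {a A B : ℝ} (hA : A < 0) (hB : 0 < B)
    (hΘ : ∀ t ∈ Set.Ioo A B, Theta a t ≠ 0) : ∀ t ∈ Set.Ioo A B, 0 < Theta a t := by
  intro t ht
  rcases lt_or_ge 0 (Theta a t) with h | h
  · exact h
  · exfalso
    have hcont : ContinuousOn (Theta a) (Set.uIcc t 0) := (theta_contDiff a (n := 0)).continuous.continuousOn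
    have hsub : Set.uIcc t 0 ⊆ Set.Ioo A B := by
      have h0 : (0:ℝ) ∈ Set.Ioo A B := ⟨hA, hB⟩
      exact (Set.ordConnected_Ioo).uIcc_subset ht h0
    have : (0:ℝ) ∈ Set.uIcc (Theta a t) (Theta a 0) := by
      rw [theta_zero]
      exact Set.mem_uIcc.2 (Or.inl ⟨h, by norm_num⟩)
    obtain ⟨s, hs, hs0⟩ := intermediate_value_uIcc hcont this
    exact hΘ s (hsub hs) hs0

lemma xfun_hasDeriv {a t : ℝ} (x₀ : ℝ) (hθ : Theta a t ≠ 0) :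
    HasDerivAt (Xfun x₀ a) (2 * uu a t / Theta a t) t := by
  have hlog : ∀ s, Xfun x₀ a s = x₀ + 2 * Real.log (Theta a s) := by
    intro s; unfold Xfun; rw [Real.log_abs]
  have h1 : HasDerivAt (fun s => Real.log (Theta a s)) (uu a t / Theta a t) t := by
    have := (Real.hasDerivAt_log hθ).comp t (theta_hasDeriv a t)
    simpa [Function.comp_def, div_eq_inv_mul] using this
  have h2 : HasDerivAt (fun s => x₀ + 2 * Real.log (Theta a s)) (2 * (uu a t / Theta a t)) t :=
    (h1.const_mul 2).const_add x₀
  have h3 : HasDerivAt (Xfun x₀ a) (2 * (uu a t / Theta a t)) t := by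
    apply h2.congr_of_eventuallyEq
    filter_upwards with s using (hlog s)
  simpa [mul_div_assoc] using h3

lemma exp_neg_xfun {a t : ℝ} (x₀ : ℝ) (hθ : 0 < Theta a t) :
    Real.exp (-(Xfun x₀ a t)) = Real.exp (-x₀) / Theta a t ^ 2 := by
  unfold Xfun
  rw [Real.log_abs]
  rw [show -(x₀ + 2 * Real.log (Theta a t)) = -x₀ + (-(Real.log (Theta a t)) + -(Real.log (Theta a t))) by ring]
  rw [Real.exp_add, Real.exp_add, Real.exp_neg, Real.exp_neg, Real.exp_log hθ]
  field_simp

lemma uu_strictMono {a A B : ℝ} (hθpos : ∀ t ∈ Set.Ioo A B, 0 < Theta a t) :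
    StrictMonoOn (uu a) (Set.Ioo A B) := by
  apply strictMonoOn_of_deriv_pos (convex_Ioo A B)
    ((uu_contDiff a (n := 0)).continuous.continuousOn)
  intro t ht
  rw [interior_Ioo] at ht
  rw [(uu_hasDeriv a t).deriv]
  have := hθpos t ht
  linarith

lemma vanish {a A B : ℝ} (hθpos : ∀ t ∈ Set.Ioo A B, 0 < Theta a t) {F : ℝ → ℝ}
    (hF : ContinuousOn F (Set.Ioo A B)) (h : ∀ t ∈ Set.Ioo A B, uu a t * F t = 0) :
    ∀ t ∈ Set.Ioo A B, F t = 0 := by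
  have hmono := uu_strictMono hθpos
  intro t ht
  by_cases hu : uu a t = 0
  · have hzero : ∀ s ∈ Set.Ioo A B, s ≠ t → F s = 0 := by
      intro s hs hne
      have hus : uu a s ≠ 0 := by
        rcases lt_or_gt_of_ne hne with hlt | hgt
        · have := hmono hs ht hlt; rw [hu] at this; exact ne_of_lt this
        · have := hmono ht hs hgt; rw [hu] at this; exact ne_of_gt this
      have := h s hs
      rcases mul_eq_zero.1 this with h1 | h2
      · exact absurd h1 hus
      · exact h2
    have hsub : Set.Ioo t B ⊆ Set.Ioo A B := Set.Ioo_subset_Ioo (le_of_lt ht.1) le_rfl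
    have cw : Filter.Tendsto F (𝓝[Set.Ioo t B] t) (𝓝 (F t)) := (hF t ht).mono hsub
    have h0 : Filter.Tendsto F (𝓝[Set.Ioo t B] t) (𝓝 0) := by
      apply Filter.Tendsto.congr' _ tendsto_const_nhds
      filter_upwards [self_mem_nhdsWithin] with s hs
      exact (hzero s (hsub hs) (ne_of_gt hs.1)).symm
    have : (𝓝[Set.Ioo t B] t).NeBot := by
      rw [nhdsWithin_Ioo_eq_nhdsGT ht.2]; infer_instance
    exact tendsto_nhds_unique cw h0
  · have := h t ht
    rcases mul_eq_zero.1 this with h1 | h2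
    · exact absurd h1 hu
    · exact h2

/-- derivative of the function t ↦ 2 u/θ (that is, ẋ). -/
lemma xd_hasDeriv {a t : ℝ} (hθ : Theta a t ≠ 0) :
    HasDerivAt (fun s => 2 * uu a s / Theta a s)
      ((1 - (2 * uu a t / Theta a t) ^ 2) / 2) t := by
  have h := ((uu_hasDeriv a t).const_mul 2).div (theta_hasDeriv a t) hθ
  refine h.congr_deriv ?_
  have h4 : Theta a t ^ 2 - 4 * uu a t ^ 2 = 1 - a ^ 2 := by
    have := Real.cosh_sq_sub_sinh_sq (t / 2); unfold Theta uu; nlinarith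
  field_simp
  ring

lemma xdd3 (m : ℕ) (x₀ a A B : ℝ) (hA : A < 0) (hB : 0 < B)
    (hΘ : ∀ t ∈ Set.Ioo A B, Theta a t ≠ 0)
    (f fd fdd : ℝ → ℝ)
    (hfd : ∀ t ∈ Set.Ioo A B, HasDerivAt f (fd t) t)
    (hfdd : ∀ t ∈ Set.Ioo A B, HasDerivAt fd (fdd t) t)
    (hcont : ContinuousOn fdd (Set.Ioo A B))
    (htxf : ∀ t ∈ Set.Ioo A B, 2 * (2 * uu a t / Theta a t) * fd t
      = ((2 * (m:ℝ) - 1) * (2 * uu a t / Theta a t) ^ 2 + 1) * f t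
        + 2 * Real.exp (-x₀) / Theta a t ^ 2 - 2 * (m:ℝ)) :
    ∀ t ∈ Set.Ioo A B, fdd t
      = ((m:ℝ) - 1) * (2 * uu a t / Theta a t) * fd t + (m:ℝ) * f t - (m:ℝ) := by
  have hθpos := theta_pos hA hB hΘ
  set E₀ := Real.exp (-x₀) with hE₀
  set F : ℝ → ℝ := fun t => 2 * fdd t - 2 * (m:ℝ) * (2 * uu a t / Theta a t) * fd t
      - (2 * (m:ℝ) - 1) * (1 - (2 * uu a t / Theta a t) ^ 2) * f t
      + 2 * E₀ / Theta a t ^ 2 with hF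
  have hIopen : IsOpen (Set.Ioo A B) := isOpen_Ioo
  -- key step : uu * F = 0 on I
  have hkey : ∀ t ∈ Set.Ioo A B, uu a t * F t = 0 := by
    intro t ht
    have hθ : Theta a t ≠ 0 := hΘ t ht
    have hxd := xd_hasDeriv hθ
    -- LHS function
    have hL : HasDerivAt (fun s => 2 * (2 * uu a s / Theta a s) * fd s)
        (2 * ((1 - (2 * uu a t / Theta a t) ^ 2) / 2) * fd t
          + 2 * (2 * uu a t / Theta a t) * fdd t) t :=
      (hxd.const_mul 2).mul (hfdd t ht)
    -- RHS function
    have hQ : HasDerivAt (fun s => (2 * (m:ℝ) - 1) * (2 * uu a s / Theta a s) ^ 2 + 1)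
        ((2 * (m:ℝ) - 1) * (2 * (2 * uu a t / Theta a t) ^ 1
          * ((1 - (2 * uu a t / Theta a t) ^ 2) / 2))) t := by
      exact ((hxd.pow 2).const_mul _).add_const 1
    have hsq : HasDerivAt (fun s => Theta a s ^ 2) (2 * Theta a t ^ 1 * uu a t) t :=
      (theta_hasDeriv a t).pow 2
    have hsqne : Theta a t ^ 2 ≠ 0 := pow_ne_zero 2 hθ
    have hEder : HasDerivAt (fun s => 2 * E₀ / Theta a s ^ 2)
        ((0 * Theta a t ^ 2 - 2 * E₀ * (2 * Theta a t ^ 1 * uu a t)) / (Theta a t ^ 2) ^ 2) t :=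
      (hasDerivAt_const t (2 * E₀)).div hsq hsqne
    have hR : HasDerivAt (fun s => ((2 * (m:ℝ) - 1) * (2 * uu a s / Theta a s) ^ 2 + 1) * f s
        + 2 * E₀ / Theta a s ^ 2 - 2 * (m:ℝ))
        (((2 * (m:ℝ) - 1) * (2 * (2 * uu a t / Theta a t) ^ 1
            * ((1 - (2 * uu a t / Theta a t) ^ 2) / 2))) * f t
          + ((2 * (m:ℝ) - 1) * (2 * uu a t / Theta a t) ^ 2 + 1) * fd t
          + (0 * Theta a t ^ 2 - 2 * E₀ * (2 * Theta a t ^ 1 * uu a t)) / (Theta a t ^ 2) ^ 2) t :=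
      ((hQ.mul (hfd t ht)).add hEder).sub_const (2 * (m:ℝ))
    -- the two functions agree on a neighbourhood of t
    have hev : (fun s => 2 * (2 * uu a s / Theta a s) * fd s)
        =ᶠ[𝓝 t] (fun s => ((2 * (m:ℝ) - 1) * (2 * uu a s / Theta a s) ^ 2 + 1) * f s
          + 2 * E₀ / Theta a s ^ 2 - 2 * (m:ℝ)) := by
      filter_upwards [hIopen.mem_nhds ht] with s hs using htxf s hs
    have hL2 := hL.congr_of_eventuallyEq hev.symm
    have hDeq := hL2.unique hR
    -- now pure algebra
    have h8 : (8:ℝ) * Theta a t ^ 6 ≠ 0 := by positivity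
    have hcancel : (8 * Theta a t ^ 6) * (uu a t * F t) = 0 := by
      rw [hF]
      linear_combination (norm := skip) (4 * Theta a t ^ 7) * hDeq
      field_simp
      ring
    exact (mul_eq_zero.1 hcancel).resolve_left h8
  -- continuity of F
  have hcf : ContinuousOn f (Set.Ioo A B) :=
    fun t ht => ((hfd t ht).continuousAt).continuousWithinAt
  have hcfd : ContinuousOn fd (Set.Ioo A B) :=
    fun t ht => ((hfdd t ht).continuousAt).continuousWithinAt
  have hcθ : ContinuousOn (fun t => Theta a t) (Set.Ioo A B) :=
    (theta_contDiff a (n := 0)).continuous.continuousOn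
  have hcu : ContinuousOn (fun t => uu a t) (Set.Ioo A B) :=
    (uu_contDiff a (n := 0)).continuous.continuousOn
  have hcxd : ContinuousOn (fun t => 2 * uu a t / Theta a t) (Set.Ioo A B) :=
    (continuousOn_const.mul hcu).div hcθ (fun t ht => hΘ t ht)
  have hcF : ContinuousOn F (Set.Ioo A B) := by
    rw [hF]
    apply ContinuousOn.add
    · apply ContinuousOn.sub
      · apply ContinuousOn.sub
        · exact (continuousOn_const.mul hcont)
        · exact ((continuousOn_const.mul hcxd).mul hcfd)
      · exact (continuousOn_const.mul (continuousOn_const.sub (hcxd.pow 2))).mul hcf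
    · exact continuousOn_const.div (hcθ.pow 2) (fun t ht => pow_ne_zero 2 (hΘ t ht))
  have hF0 := vanish hθpos hcF hkey
  intro t ht
  have h1 := hF0 t ht
  rw [hF] at h1
  have h2 := htxf t ht
  linear_combination h1 / 2 + h2 / 2

noncomputable def h1 (a : ℝ) (m : ℕ) (t : ℝ) : ℝ := Theta a t ^ (2*m-1) * uu a t
noncomputable def h1d (a : ℝ) (m : ℕ) (t : ℝ) : ℝ :=
  (2*(m:ℝ)-1) * Theta a t ^ (2*m-2) * uu a t ^ 2 + Theta a t ^ (2*m) / 4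
noncomputable def h1dd (a : ℝ) (m : ℕ) (t : ℝ) : ℝ :=
  (2*(m:ℝ)-1)*(2*(m:ℝ)-2) * Theta a t ^ (2*m-3) * uu a t ^ 3
    + (2*(m:ℝ)-1) * Theta a t ^ (2*m-1) * uu a t / 2
    + (m:ℝ) * Theta a t ^ (2*m-1) * uu a t / 2

lemma pow_shift (x : ℝ) {i j : ℕ} (h : i + 1 = j) : x ^ i * x = x ^ j := by
  subst h; rw [pow_succ]

lemma cast21 {m : ℕ} (hm : 2 ≤ m) : ((2*m-1 : ℕ) : ℝ) = 2*(m:ℝ)-1 := by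
  have h1 : (1:ℕ) ≤ 2*m := by omega
  push_cast [Nat.cast_sub h1]; ring

lemma cast22 {m : ℕ} (hm : 2 ≤ m) : ((2*m-2 : ℕ) : ℝ) = 2*(m:ℝ)-2 := by
  have h1 : (2:ℕ) ≤ 2*m := by omega
  push_cast [Nat.cast_sub h1]; ring

lemma h1_hasDeriv (a : ℝ) {m : ℕ} (hm : 2 ≤ m) (t : ℝ) :
    HasDerivAt (h1 a m) (h1d a m t) t := by
  have hp : HasDerivAt (fun s => Theta a s ^ (2*m-1))
      (((2*m-1 : ℕ) : ℝ) * Theta a t ^ (2*m-1-1) * uu a t) t := (theta_hasDeriv a t).pow _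
  have h := hp.mul (uu_hasDeriv a t)
  have hfun : h1 a m = fun s => Theta a s ^ (2*m-1) * uu a s := rfl
  rw [hfun]
  refine h.congr_deriv ?_
  unfold h1d
  have e1 : (2*m-1-1) = 2*m-2 := by omega
  have eb : Theta a t ^ (2*m-1) * Theta a t = Theta a t ^ (2*m) := pow_shift _ (by omega)
  rw [e1, cast21 hm]
  linear_combination (1/4 : ℝ) * eb

lemma h1d_hasDeriv (a : ℝ) {m : ℕ} (hm : 2 ≤ m) (t : ℝ) :
    HasDerivAt (h1d a m) (h1dd a m t) t := by
  have hp2 : HasDerivAt (fun s => Theta a s ^ (2*m-2))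
      (((2*m-2 : ℕ) : ℝ) * Theta a t ^ (2*m-2-1) * uu a t) t := (theta_hasDeriv a t).pow _
  have hu2 : HasDerivAt (fun s => uu a s ^ 2)
      (((2 : ℕ) : ℝ) * uu a t ^ 1 * (Theta a t / 4)) t := (uu_hasDeriv a t).pow _
  have hp0 : HasDerivAt (fun s => Theta a s ^ (2*m))
      (((2*m : ℕ) : ℝ) * Theta a t ^ (2*m-1) * uu a t) t := (theta_hasDeriv a t).pow _
  have h := (((hp2.mul hu2).const_mul (2*(m:ℝ)-1)).add (hp0.div_const 4))
  have hfun : h1d a m = fun s => (2*(m:ℝ)-1) * (Theta a s ^ (2*m-2) * uu a s ^ 2)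
      + Theta a s ^ (2*m) / 4 := by
    funext s; unfold h1d; ring
  rw [hfun]
  refine h.congr_deriv ?_
  unfold h1dd
  have e1 : (2*m-2-1) = 2*m-3 := by omega
  have eb : Theta a t ^ (2*m-2) * Theta a t = Theta a t ^ (2*m-1) := pow_shift _ (by omega)
  have e4 : ((2*m : ℕ) : ℝ) = 2*(m:ℝ) := by push_cast; ring
  rw [e1, cast22 hm, e4]
  push_cast
  linear_combination ((2*(m:ℝ)-1) * uu a t / 2) * eb

lemma powsplit (a t : ℝ) {m : ℕ} (hm : 2 ≤ m) :
    Theta a t ^ (2*m-2) = Theta a t ^ (2*m-3) * Theta a t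
    ∧ Theta a t ^ (2*m-1) = Theta a t ^ (2*m-3) * Theta a t ^ 2
    ∧ Theta a t ^ (2*m) = Theta a t ^ (2*m-3) * Theta a t ^ 3 := by
  refine ⟨(pow_shift _ (by omega)).symm, ?_, ?_⟩ <;> rw [← pow_add] <;> congr 1 <;> omega

lemma h1_id1 {a t : ℝ} (m : ℕ) (hm : 2 ≤ m) (hθ : Theta a t ≠ 0) :
    2 * (2*uu a t/Theta a t) * h1d a m t
      = ((2*(m:ℝ)-1) * (2*uu a t/Theta a t)^2 + 1) * h1 a m t := by
  obtain ⟨E2, E1, E0⟩ := powsplit a t hm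
  unfold h1 h1d
  rw [E2, E1, E0]
  field_simp
  ring

lemma h1_id2 {a t : ℝ} (m : ℕ) (hm : 2 ≤ m) (hθ : Theta a t ≠ 0) :
    h1dd a m t = ((m:ℝ)-1) * (2*uu a t/Theta a t) * h1d a m t + (m:ℝ) * h1 a m t := by
  obtain ⟨E2, E1, E0⟩ := powsplit a t hm
  unfold h1 h1d h1dd
  rw [E2, E1, E0]
  field_simp
  ring

lemma h1d_pos {a t : ℝ} (m : ℕ) (hm : 2 ≤ m) (hθ : Theta a t ≠ 0) :
    0 < h1d a m t := by
  unfold h1d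
  have h2 : (0:ℝ) < 2*(m:ℝ)-1 := by
    have : (2:ℝ) ≤ (m:ℝ) := by exact_mod_cast hm
    linarith
  have e1 : Theta a t ^ (2*m-2) = (Theta a t ^ (m-1))^2 := by
    rw [← pow_mul]; congr 1; omega
  have e2 : Theta a t ^ (2*m) = (Theta a t ^ m)^2 := by
    rw [← pow_mul]; congr 1; omega
  have p1 : 0 ≤ (2*(m:ℝ)-1) * Theta a t ^ (2*m-2) * uu a t ^ 2 := by
    rw [e1]; positivity
  have p2 : 0 < Theta a t ^ (2*m) / 4 := by
    rw [e2]
    have : Theta a t ^ m ≠ 0 := pow_ne_zero _ hθ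
    positivity
  linarith

lemma h1_contDiff (a : ℝ) (m : ℕ) {n : WithTop ℕ∞} : ContDiff ℝ n (h1 a m) := by
  unfold h1
  exact ((theta_contDiff a).pow _).mul (uu_contDiff a)

lemma h1d_contDiff (a : ℝ) (m : ℕ) {n : WithTop ℕ∞} : ContDiff ℝ n (h1d a m) := by
  unfold h1d
  exact ((contDiff_const.mul ((theta_contDiff a).pow _)).mul ((uu_contDiff a).pow _)).add
    (((theta_contDiff a).pow _).div_const 4)

lemma const_K {A B : ℝ} {K : ℝ → ℝ} (hK : ∀ t ∈ Set.Ioo A B, HasDerivAt K 0 t)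
    {s t : ℝ} (hs : s ∈ Set.Ioo A B) (ht : t ∈ Set.Ioo A B) : K s = K t := by
  apply (convex_Ioo A B).is_const_of_fderivWithin_eq_zero
    (fun x hx => ((hK x hx).differentiableAt).differentiableWithinAt) _ hs ht
  intro x hx
  rw [fderivWithin_of_isOpen isOpen_Ioo hx]
  rw [((hK x hx).hasFDerivAt).fderiv]
  ext y
  simp

noncomputable def bb : ℕ → ℝ := fun k => ∏ j ∈ Finset.range k, ((2*(j:ℝ)-1)/(2*(j:ℝ)+2))

lemma bb_zero : bb 0 = 1 := by simp [bb]

lemma bb_rec (k : ℕ) : (2*(k:ℝ)+2) * bb (k+1) = (2*(k:ℝ)-1) * bb k := by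
  unfold bb
  rw [Finset.prod_range_succ]
  have h : (2*(k:ℝ)+2) ≠ 0 := by positivity
  field_simp

lemma bb_ne (m : ℕ) : bb m ≠ 0 := by
  unfold bb
  apply Finset.prod_ne_zero_iff.2
  intro j _
  apply div_ne_zero
  · rcases Nat.eq_zero_or_pos j with h | h
    · subst h; norm_num
    · have : (1:ℝ) ≤ (j:ℝ) := by exact_mod_cast h
      have : (0:ℝ) < 2*(j:ℝ)-1 := by linarith
      exact ne_of_gt this
  · positivity

noncomputable def HH (a : ℝ) (m : ℕ) (t : ℝ) : ℝ :=
  ∑ k ∈ Finset.range (m+1), bb k * (1-a^2)^k * Theta a t ^ (2*(m-k))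
noncomputable def HHd (a : ℝ) (m : ℕ) (t : ℝ) : ℝ :=
  ∑ k ∈ Finset.range (m+1),
    bb k * (1-a^2)^k * (((2*(m-k) : ℕ)) : ℝ) * Theta a t ^ (2*(m-k)-1) * uu a t

lemma HH_hasDeriv (a : ℝ) (m : ℕ) (t : ℝ) : HasDerivAt (HH a m) (HHd a m t) t := by
  have hfun : HH a m = fun s => ∑ k ∈ Finset.range (m+1),
      bb k * (1-a^2)^k * Theta a s ^ (2*(m-k)) := rfl
  rw [hfun]
  apply HasDerivAt.fun_sum
  intro k _
  have hp : HasDerivAt (fun s => Theta a s ^ (2*(m-k)))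
      ((((2*(m-k) : ℕ)) : ℝ) * Theta a t ^ (2*(m-k)-1) * uu a t) t := (theta_hasDeriv a t).pow _
  have := hp.const_mul (bb k * (1-a^2)^k)
  refine this.congr_deriv ?_
  ring

lemma HH_contDiff (a : ℝ) (m : ℕ) {n : WithTop ℕ∞} : ContDiff ℝ n (HH a m) := by
  have hfun : HH a m = fun s => ∑ k ∈ Finset.range (m+1),
      bb k * (1-a^2)^k * Theta a s ^ (2*(m-k)) := rfl
  rw [hfun]
  apply ContDiff.sum
  intro k _
  exact contDiff_const.mul ((theta_contDiff a).pow _)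

lemma HHd_contDiff (a : ℝ) (m : ℕ) {n : WithTop ℕ∞} : ContDiff ℝ n (HHd a m) := by
  have hfun : HHd a m = fun s => ∑ k ∈ Finset.range (m+1),
      bb k * (1-a^2)^k * (((2*(m-k) : ℕ)) : ℝ) * Theta a s ^ (2*(m-k)-1) * uu a s := rfl
  rw [hfun]
  apply ContDiff.sum
  intro k _
  exact (contDiff_const.mul ((theta_contDiff a).pow _)).mul (uu_contDiff a)

lemma HH_key (a : ℝ) {m : ℕ} (hm : 2 ≤ m) (t : ℝ) :
    4 * uu a t * Theta a t * HHd a m t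
      = ((2*(m:ℝ)-1) * (4 * uu a t ^ 2) + Theta a t ^ 2) * HH a m t
        + (2*(m:ℝ)-1) * bb m * (1-a^2)^(m+1) := by
  set c := 1 - a^2 with hcdef
  set θ := Theta a t with hθdef
  set u := uu a t with hudef
  have hc : 4 * u^2 = θ^2 - c := by
    have := theta_sq a t; rw [← hcdef, ← hθdef, ← hudef] at this; linarith
  set G : ℕ → ℝ := fun k => -2*(k:ℝ) * bb k * c^k * θ^(2*(m-k)+2) with hGdef
  have claim1 : ∀ k < m,
      4*u*θ*(bb k * c^k * (((2*(m-k) : ℕ)) : ℝ) * θ^(2*(m-k)-1) * u)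
        - ((2*(m:ℝ)-1) * (4*u^2) + θ^2) * (bb k * c^k * θ^(2*(m-k)))
      = G k - G (k+1) := by
    intro k hk
    have e1 : θ^(2*(m-k)-1) * θ = θ^(2*(m-k)) := pow_shift _ (by omega)
    have e2 : θ^(2*(m-k)+2) = θ^(2*(m-k)-1) * θ * θ^2 := by
      rw [e1, ← pow_add]
    have e3 : 2*(m-(k+1))+2 = 2*(m-k) := by omega
    have e4 : (((2*(m-k) : ℕ)) : ℝ) = 2*(m:ℝ) - 2*(k:ℝ) := by
      have hle : k ≤ m := le_of_lt hk
      push_cast [Nat.cast_sub hle]; ring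
    have hrec := bb_rec k
    simp only [hGdef]
    rw [e3, e4, ← e1, e2]
    push_cast
    linear_combination (bb k * c^k * θ^(2*(m-k)-1) * θ * ((2*(m:ℝ)-2*k) - (2*(m:ℝ)-1))) * hc
      - (c^(k+1) * θ^(2*(m-k)-1) * θ) * hrec
  have claim2 :
      4*u*θ*(bb m * c^m * (((2*(m-m) : ℕ)) : ℝ) * θ^(2*(m-m)-1) * u)
        - ((2*(m:ℝ)-1) * (4*u^2) + θ^2) * (bb m * c^m * θ^(2*(m-m)))
      = G m + (2*(m:ℝ)-1) * bb m * c^(m+1) := by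
    simp only [hGdef, Nat.sub_self, Nat.mul_zero, Nat.zero_sub, Nat.cast_zero, pow_zero]
    norm_num
    linear_combination (-(2*(m:ℝ)-1) * bb m * c^m) * hc
  -- assemble
  have expand : 4*u*θ*HHd a m t - ((2*(m:ℝ)-1) * (4*u^2) + θ^2) * HH a m t
      = ∑ k ∈ Finset.range (m+1),
        (4*u*θ*(bb k * c^k * (((2*(m-k) : ℕ)) : ℝ) * θ^(2*(m-k)-1) * u)
          - ((2*(m:ℝ)-1) * (4*u^2) + θ^2) * (bb k * c^k * θ^(2*(m-k)))) := by
    unfold HHd HH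
    rw [Finset.mul_sum, Finset.mul_sum, ← Finset.sum_sub_distrib]
  have tele : ∑ k ∈ Finset.range m, (G k - G (k+1)) = G 0 - G m :=
    Finset.sum_range_sub' G m
  have hG0 : G 0 = 0 := by simp [hGdef]
  have : 4*u*θ*HHd a m t - ((2*(m:ℝ)-1) * (4*u^2) + θ^2) * HH a m t
      = (2*(m:ℝ)-1) * bb m * c^(m+1) := by
    rw [expand, Finset.sum_range_succ]
    rw [Finset.sum_congr rfl (fun k hk => claim1 k (Finset.mem_range.1 hk))]
    rw [tele, hG0, claim2]
    ring
  linarith [this]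

lemma master (m : ℕ) (hm : 2 ≤ m) (x₀ φ₀ a d : ℝ)
    (A B : ℝ) (hA : A < 0) (hB : 0 < B)
    (hΘ : ∀ t ∈ Set.Ioo A B, Theta a t ≠ 0)
    (φ φd : ℝ → ℝ)
    (hsm : ContDiffOn ℝ (⊤ : ℕ∞) φ (Set.Ioo A B))
    (hsmd : ContDiffOn ℝ (⊤ : ℕ∞) φd (Set.Ioo A B))
    (hder : ∀ t ∈ Set.Ioo A B, HasDerivAt φ (φd t) t)
    (h00 : φ 0 = φ₀) (hd00 : φd 0 = d)
    (htxf : ∀ t ∈ Set.Ioo A B, 2 * (2*uu a t/Theta a t) * φd t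
      = ((2*(m:ℝ)-1)*(2*uu a t/Theta a t)^2+1) * φ t
        + 2 * Real.exp (-x₀) / Theta a t ^ 2 - 2*(m:ℝ)) :
    ∃ φ : ℝ → ℝ,
      (ContDiffOn ℝ (⊤ : ℕ∞) φ (Set.Ioo A B) ∧ φ 0 = φ₀ ∧ deriv φ 0 = d ∧
        ∀ t ∈ Set.Ioo A B,
          2 * deriv (Xfun x₀ a) t * deriv φ t
            = ((2 * (m : ℝ) - 1) * (deriv (Xfun x₀ a) t) ^ 2 + 1) * φ t
              + 2 * Real.exp (-(Xfun x₀ a t)) - 2 * (m : ℝ)) ∧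
      (∀ t ∈ Set.Ioo A B,
        2 * deriv (deriv (Xfun x₀ a)) t
          = (deriv zeroFun t) ^ 2 - (deriv (Xfun x₀ a) t) ^ 2 + 1) ∧
      (∀ t ∈ Set.Ioo A B,
        φ t * deriv (deriv zeroFun) t
          = ((m : ℝ) - 1) * φ t * deriv (Xfun x₀ a) t * deriv zeroFun t
            - deriv φ t * deriv zeroFun t
            - zeroFun t * Real.exp (zeroFun t - Xfun x₀ a t)) ∧
      (∀ t ∈ Set.Ioo A B,
        deriv (deriv φ) t
          = ((m : ℝ) - 1) * deriv (Xfun x₀ a) t * deriv φ t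
            + (m : ℝ) * φ t - (m : ℝ)) ∧
      (∀ t ∈ Set.Ioo A B,
        2 * deriv (Xfun x₀ a) t * deriv φ t
          - (2 * (m : ℝ) - 1) * φ t * (deriv (Xfun x₀ a) t) ^ 2
          + φ t * (deriv zeroFun t) ^ 2
          + 2 * (zeroFun t - 1) * Real.exp (zeroFun t - Xfun x₀ a t)
          - φ t + 2 * (m : ℝ) = 0) ∧
      (∀ ψ : ℝ → ℝ,
        (ContDiffOn ℝ (⊤ : ℕ∞) ψ (Set.Ioo A B) ∧ ψ 0 = φ₀ ∧ deriv ψ 0 = d ∧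
          ∀ t ∈ Set.Ioo A B,
            2 * deriv (Xfun x₀ a) t * deriv ψ t
              = ((2 * (m : ℝ) - 1) * (deriv (Xfun x₀ a) t) ^ 2 + 1) * ψ t
                + 2 * Real.exp (-(Xfun x₀ a t)) - 2 * (m : ℝ)) →
        ∀ t ∈ Set.Ioo A B, ψ t = φ t) := by
  have hIopen : IsOpen (Set.Ioo A B) := isOpen_Ioo
  have h0mem : (0:ℝ) ∈ Set.Ioo A B := ⟨hA, hB⟩
  have hθpos := theta_pos hA hB hΘ
  have hXder : ∀ t ∈ Set.Ioo A B, deriv (Xfun x₀ a) t = 2 * uu a t / Theta a t :=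
    fun t ht => (xfun_hasDeriv x₀ (hΘ t ht)).deriv
  have hexp : ∀ t ∈ Set.Ioo A B,
      Real.exp (-(Xfun x₀ a t)) = Real.exp (-x₀) / Theta a t ^ 2 :=
    fun t ht => exp_neg_xfun x₀ (hθpos t ht)
  have hφder : ∀ t ∈ Set.Ioo A B, deriv φ t = φd t := fun t ht => (hder t ht).deriv
  -- second derivative data for φ
  have hφdd : ∀ t ∈ Set.Ioo A B, HasDerivAt φd (deriv φd t) t := by
    intro t ht
    exact ((hsmd.differentiableOn (by simp)).differentiableAt (hIopen.mem_nhds ht)).hasDerivAt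
  have hφddcont : ContinuousOn (deriv φd) (Set.Ioo A B) :=
    (hsmd.deriv_of_isOpen (m := (⊤ : ℕ∞)) hIopen (by simp)).continuousOn
  have h3 := xdd3 m x₀ a A B hA hB hΘ φ φd (deriv φd) hder hφdd hφddcont htxf
  refine ⟨φ, ⟨hsm, h00, by rw [hφder 0 h0mem]; exact hd00, ?_⟩, ?_, ?_, ?_, ?_, ?_⟩
  · -- txf
    intro t ht
    rw [hXder t ht, hφder t ht, hexp t ht]
    linear_combination htxf t ht
  · -- xdd.i
    intro t ht
    have hev : deriv (Xfun x₀ a) =ᶠ[𝓝 t] (fun s => 2 * uu a s / Theta a s) := by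
      filter_upwards [hIopen.mem_nhds ht] with s hs using hXder s hs
    rw [hev.deriv_eq, (xd_hasDeriv (hΘ t ht)).deriv, hXder t ht]
    have hz1 : deriv zeroFun = fun _ => (0:ℝ) := by
      funext s; exact deriv_const s 0
    rw [hz1]
    ring
  · -- xdd.ii
    intro t ht
    have hz1 : deriv zeroFun = fun _ => (0:ℝ) := by
      funext s; exact deriv_const s 0
    rw [hz1]
    simp [zeroFun]
  · -- xdd.iii
    intro t ht
    have hev : deriv φ =ᶠ[𝓝 t] φd := by
      filter_upwards [hIopen.mem_nhds ht] with s hs using hφder s hs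
    rw [hev.deriv_eq, hXder t ht, hφder t ht]
    exact h3 t ht
  · -- int
    intro t ht
    have hz : zeroFun t = 0 := rfl
    rw [hXder t ht, hφder t ht, hz]
    rw [show (0:ℝ) - Xfun x₀ a t = -(Xfun x₀ a t) by ring, hexp t ht]
    have hz1 : deriv zeroFun = fun _ => (0:ℝ) := by
      funext s; exact deriv_const s 0
    rw [hz1]
    simp only
    linear_combination htxf t ht
  · -- uniqueness
    rintro ψ ⟨hsmψ, hψ0, hψd0, htxfψgoal⟩ t ht
    have hψder : ∀ s ∈ Set.Ioo A B, HasDerivAt ψ (deriv ψ s) s := by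
      intro s hs
      exact ((hsmψ.differentiableOn (by simp)).differentiableAt (hIopen.mem_nhds hs)).hasDerivAt
    have htxfψ : ∀ s ∈ Set.Ioo A B, 2 * (2*uu a s/Theta a s) * deriv ψ s
        = ((2*(m:ℝ)-1)*(2*uu a s/Theta a s)^2+1) * ψ s
          + 2 * Real.exp (-x₀) / Theta a s ^ 2 - 2*(m:ℝ) := by
      intro s hs
      have h := htxfψgoal s hs
      rw [hXder s hs, hexp s hs] at h
      linear_combination h
    have hsmψd : ContDiffOn ℝ (⊤ : ℕ∞) (deriv ψ) (Set.Ioo A B) :=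
      hsmψ.deriv_of_isOpen (m := (⊤ : ℕ∞)) hIopen (by simp)
    have hψdd : ∀ s ∈ Set.Ioo A B, HasDerivAt (deriv ψ) (deriv (deriv ψ) s) s := by
      intro s hs
      exact ((hsmψd.differentiableOn (by simp)).differentiableAt (hIopen.mem_nhds hs)).hasDerivAt
    have hψddcont : ContinuousOn (deriv (deriv ψ)) (Set.Ioo A B) :=
      (hsmψd.deriv_of_isOpen (m := (⊤ : ℕ∞)) hIopen (by simp)).continuousOn
    have h3ψ := xdd3 m x₀ a A B hA hB hΘ ψ (deriv ψ) (deriv (deriv ψ)) hψder hψdd hψddcont htxfψ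
    -- difference
    set δ : ℝ → ℝ := fun s => ψ s - φ s with hδdef
    set δd : ℝ → ℝ := fun s => deriv ψ s - φd s with hδddef
    have hom1 : ∀ s ∈ Set.Ioo A B, 2 * (2*uu a s/Theta a s) * δd s
        = ((2*(m:ℝ)-1)*(2*uu a s/Theta a s)^2+1) * δ s := by
      intro s hs
      simp only [hδdef, hδddef]
      linear_combination (htxfψ s hs) - (htxf s hs)
    have hom2 : ∀ s ∈ Set.Ioo A B, deriv (deriv ψ) s - deriv φd s
        = ((m:ℝ)-1) * (2*uu a s/Theta a s) * δd s + (m:ℝ) * δ s := by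
      intro s hs
      simp only [hδdef, hδddef]
      linear_combination (h3ψ s hs) - (h3 s hs)
    set W : ℝ → ℝ := fun s => δd s * h1 a m s - δ s * h1d a m s with hWdef
    have hW0 : ∀ s ∈ Set.Ioo A B, uu a s * W s = 0 := by
      intro s hs
      have hθ := hΘ s hs
      have hxdW : (2 * uu a s / Theta a s) * W s = 0 := by
        simp only [hWdef]
        linear_combination (h1 a m s) * (hom1 s hs) / 2 - (δ s) * (h1_id1 m hm hθ) / 2
      have h2 : (2 / Theta a s) * (uu a s * W s) = 0 := by
        rw [← hxdW]; ring
      rcases mul_eq_zero.1 h2 with h | h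
      · exact absurd h (div_ne_zero two_ne_zero hθ)
      · exact h
    have hWcont : ContinuousOn W (Set.Ioo A B) := by
      apply ContinuousOn.sub
      · exact (ContinuousOn.sub
          (fun s hs => ((hψdd s hs).continuousAt).continuousWithinAt)
          (fun s hs => ((hφdd s hs).continuousAt).continuousWithinAt)).mul
          (h1_contDiff a m (n := 0)).continuous.continuousOn
      · exact (ContinuousOn.sub
          (fun s hs => ((hψder s hs).continuousAt).continuousWithinAt)
          (fun s hs => ((hder s hs).continuousAt).continuousWithinAt)).mul
          (h1d_contDiff a m (n := 0)).continuous.continuousOn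
    have hW := vanish hθpos hWcont hW0
    -- K := δd / h1d is constant
    set K : ℝ → ℝ := fun s => δd s / h1d a m s with hKdef
    have hKd : ∀ s ∈ Set.Ioo A B, HasDerivAt K 0 s := by
      intro s hs
      have hθ := hΘ s hs
      have hnum : HasDerivAt δd (deriv (deriv ψ) s - deriv φd s) s :=
        (hψdd s hs).sub (hφdd s hs)
      have h := hnum.div (h1d_hasDeriv a hm s) (ne_of_gt (h1d_pos m hm hθ))
      refine h.congr_deriv ?_
      rw [div_eq_iff (pow_ne_zero 2 (ne_of_gt (h1d_pos m hm hθ)))]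
      have e : (deriv (deriv ψ) s - deriv φd s) * h1d a m s - δd s * h1dd a m s = 0 := by
        linear_combination (h1d a m s) * (hom2 s hs) - (δd s) * (h1_id2 m hm hθ)
          - (m:ℝ) * (hW s hs)
      rw [e]; ring
    have hK0 : K 0 = 0 := by
      simp only [hKdef, hδddef]
      rw [hψd0, hd00]
      simp
    have hKt := const_K hKd ht h0mem
    rw [hK0] at hKt
    have hδd0 : δd t = 0 := by
      have := hKt
      simp only [hKdef] at this
      have hpos := h1d_pos m hm (hΘ t ht)
      field_simp at this
      simpa using this
    have hQpos : (0:ℝ) < (2*(m:ℝ)-1)*(2*uu a t/Theta a t)^2+1 := by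
      have h2 : (0:ℝ) ≤ 2*(m:ℝ)-1 := by
        have : (2:ℝ) ≤ (m:ℝ) := by exact_mod_cast hm
        linarith
      positivity
    have h := hom1 t ht
    rw [hδd0] at h
    have hδ0 : δ t = 0 := by
      have := h.symm
      rw [mul_comm] at this
      have h0 : ((2*(m:ℝ)-1)*(2*uu a t/Theta a t)^2+1) * δ t = 0 := by linarith [h]
      rcases mul_eq_zero.1 h0 with h | h
      · exact absurd h (ne_of_gt hQpos)
      · exact h
    have : ψ t - φ t = 0 := hδ0
    linarith

lemma build (m : ℕ) (hm : 2 ≤ m) (x₀ φ₀ a d : ℝ)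
    (hinit : 2 * a * d
      = ((2 * (m : ℝ) - 1) * a ^ 2 + 1) * φ₀ + 2 * Real.exp (-x₀) - 2 * (m : ℝ))
    (A B : ℝ) (hA : A < 0) (hB : 0 < B)
    (hΘ : ∀ t ∈ Set.Ioo A B, Theta a t ≠ 0)
    (p pd : ℝ → ℝ)
    (hsmp : ContDiffOn ℝ (⊤ : ℕ∞) p (Set.Ioo A B))
    (hsmpd : ContDiffOn ℝ (⊤ : ℕ∞) pd (Set.Ioo A B))
    (hpder : ∀ t ∈ Set.Ioo A B, HasDerivAt p (pd t) t)
    (htxfp : ∀ t ∈ Set.Ioo A B, 2 * (2*uu a t/Theta a t) * pd t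
      = ((2*(m:ℝ)-1)*(2*uu a t/Theta a t)^2+1) * p t
        + 2 * Real.exp (-x₀) / Theta a t ^ 2 - 2*(m:ℝ)) :
    ∃ φ : ℝ → ℝ,
      (ContDiffOn ℝ (⊤ : ℕ∞) φ (Set.Ioo A B) ∧ φ 0 = φ₀ ∧ deriv φ 0 = d ∧
        ∀ t ∈ Set.Ioo A B,
          2 * deriv (Xfun x₀ a) t * deriv φ t
            = ((2 * (m : ℝ) - 1) * (deriv (Xfun x₀ a) t) ^ 2 + 1) * φ t
              + 2 * Real.exp (-(Xfun x₀ a t)) - 2 * (m : ℝ)) ∧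
      (∀ t ∈ Set.Ioo A B,
        2 * deriv (deriv (Xfun x₀ a)) t
          = (deriv zeroFun t) ^ 2 - (deriv (Xfun x₀ a) t) ^ 2 + 1) ∧
      (∀ t ∈ Set.Ioo A B,
        φ t * deriv (deriv zeroFun) t
          = ((m : ℝ) - 1) * φ t * deriv (Xfun x₀ a) t * deriv zeroFun t
            - deriv φ t * deriv zeroFun t
            - zeroFun t * Real.exp (zeroFun t - Xfun x₀ a t)) ∧
      (∀ t ∈ Set.Ioo A B,
        deriv (deriv φ) t
          = ((m : ℝ) - 1) * deriv (Xfun x₀ a) t * deriv φ t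
            + (m : ℝ) * φ t - (m : ℝ)) ∧
      (∀ t ∈ Set.Ioo A B,
        2 * deriv (Xfun x₀ a) t * deriv φ t
          - (2 * (m : ℝ) - 1) * φ t * (deriv (Xfun x₀ a) t) ^ 2
          + φ t * (deriv zeroFun t) ^ 2
          + 2 * (zeroFun t - 1) * Real.exp (zeroFun t - Xfun x₀ a t)
          - φ t + 2 * (m : ℝ) = 0) ∧
      (∀ ψ : ℝ → ℝ,
        (ContDiffOn ℝ (⊤ : ℕ∞) ψ (Set.Ioo A B) ∧ ψ 0 = φ₀ ∧ deriv ψ 0 = d ∧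
          ∀ t ∈ Set.Ioo A B,
            2 * deriv (Xfun x₀ a) t * deriv ψ t
              = ((2 * (m : ℝ) - 1) * (deriv (Xfun x₀ a) t) ^ 2 + 1) * ψ t
                + 2 * Real.exp (-(Xfun x₀ a t)) - 2 * (m : ℝ)) →
        ∀ t ∈ Set.Ioo A B, ψ t = φ t) := by
  have h0mem : (0:ℝ) ∈ Set.Ioo A B := ⟨hA, hB⟩
  set C : ℝ := if a = 0 then (d - pd 0)*4 else (φ₀ - p 0)*2/a with hC
  set φ : ℝ → ℝ := fun t => p t + C * h1 a m t with hφ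
  set φd : ℝ → ℝ := fun t => pd t + C * h1d a m t with hφd
  have hsm : ContDiffOn ℝ (⊤ : ℕ∞) φ (Set.Ioo A B) :=
    hsmp.add ((contDiff_const.mul (h1_contDiff a m)).contDiffOn)
  have hsmd : ContDiffOn ℝ (⊤ : ℕ∞) φd (Set.Ioo A B) :=
    hsmpd.add ((contDiff_const.mul (h1d_contDiff a m)).contDiffOn)
  have hder : ∀ t ∈ Set.Ioo A B, HasDerivAt φ (φd t) t := by
    intro t ht
    exact (hpder t ht).add ((h1_hasDeriv a hm t).const_mul C)
  have htxf : ∀ t ∈ Set.Ioo A B, 2 * (2*uu a t/Theta a t) * φd t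
      = ((2*(m:ℝ)-1)*(2*uu a t/Theta a t)^2+1) * φ t
        + 2 * Real.exp (-x₀) / Theta a t ^ 2 - 2*(m:ℝ) := by
    intro t ht
    simp only [hφ, hφd]
    linear_combination (htxfp t ht) + C * (h1_id1 m hm (hΘ t ht))
  -- initial conditions
  have hθ0 : Theta a 0 = 1 := theta_zero a
  have hu0 : uu a 0 = a/2 := uu_zero a
  have hq0 : 2*a*(pd 0) = ((2*(m:ℝ)-1)*a^2+1)*(p 0) + 2*Real.exp (-x₀) - 2*(m:ℝ) := by
    have h := htxfp 0 h0mem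
    rw [hθ0, hu0] at h
    norm_num at h
    linear_combination h
  have hphi0 : φ 0 = p 0 + C*(a/2) := by
    simp only [hφ, h1, hθ0, hu0, one_pow]
    ring
  have hphid0 : φd 0 = pd 0 + C*(((2*(m:ℝ)-1)*a^2+1)/4) := by
    simp only [hφd, h1d, hθ0, hu0, one_pow]
    ring
  have hIC : φ 0 = φ₀ ∧ φd 0 = d := by
    rcases eq_or_ne a 0 with ha | ha
    · rw [hC] at hphi0 hphid0
      rw [if_pos ha] at hphi0 hphid0
      subst ha
      constructor
      · rw [hphi0]
        norm_num at hq0 hinit ⊢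
        linarith [hq0, hinit]
      · rw [hphid0]
        ring
    · rw [hC] at hphi0 hphid0
      rw [if_neg ha] at hphi0 hphid0
      constructor
      · rw [hphi0]
        field_simp
        ring
      · rw [hphid0]
        field_simp
        linear_combination 2 * hq0 - 2 * hinit
  exact master m hm x₀ φ₀ a d A B hA hB hΘ φ φd hsm hsmd hder hIC.1 hIC.2 htxf

/-- given initial data satisfying the compatibility condition
(war), on an open interval containing 0 where Θ ≠ 0, there is a unique smooth
φ with φ(0) = φ₀, φ̇(0) = d solving (txf), and for this φ the triple
(x, 0, φ) solves (xdd) together with (int). -/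
theorem stmt_6 (m : ℕ) (hm : 2 ≤ m) (x₀ φ₀ a d : ℝ)
    (hinit : 2 * a * d
      = ((2 * (m : ℝ) - 1) * a ^ 2 + 1) * φ₀ + 2 * Real.exp (-x₀) - 2 * (m : ℝ))
    (A B : ℝ) (hA : A < 0) (hB : 0 < B)
    (hΘ : ∀ t ∈ Set.Ioo A B, Theta a t ≠ 0) :
    ∃ φ : ℝ → ℝ,
      -- φ is the unique smooth solution of (txf) with the given initial data
      (ContDiffOn ℝ (⊤ : ℕ∞) φ (Set.Ioo A B) ∧ φ 0 = φ₀ ∧ deriv φ 0 = d ∧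
        ∀ t ∈ Set.Ioo A B,
          2 * deriv (Xfun x₀ a) t * deriv φ t
            = ((2 * (m : ℝ) - 1) * (deriv (Xfun x₀ a) t) ^ 2 + 1) * φ t
              + 2 * Real.exp (-(Xfun x₀ a t)) - 2 * (m : ℝ)) ∧
      -- (x, 0, φ) solves (xdd.i)
      (∀ t ∈ Set.Ioo A B,
        2 * deriv (deriv (Xfun x₀ a)) t
          = (deriv zeroFun t) ^ 2 - (deriv (Xfun x₀ a) t) ^ 2 + 1) ∧
      -- (xdd.ii)
      (∀ t ∈ Set.Ioo A B,
        φ t * deriv (deriv zeroFun) t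
          = ((m : ℝ) - 1) * φ t * deriv (Xfun x₀ a) t * deriv zeroFun t
            - deriv φ t * deriv zeroFun t
            - zeroFun t * Real.exp (zeroFun t - Xfun x₀ a t)) ∧
      -- (xdd.iii)
      (∀ t ∈ Set.Ioo A B,
        deriv (deriv φ) t
          = ((m : ℝ) - 1) * deriv (Xfun x₀ a) t * deriv φ t
            + (m : ℝ) * φ t - (m : ℝ)) ∧
      -- (int)
      (∀ t ∈ Set.Ioo A B,
        2 * deriv (Xfun x₀ a) t * deriv φ t
          - (2 * (m : ℝ) - 1) * φ t * (deriv (Xfun x₀ a) t) ^ 2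
          + φ t * (deriv zeroFun t) ^ 2
          + 2 * (zeroFun t - 1) * Real.exp (zeroFun t - Xfun x₀ a t)
          - φ t + 2 * (m : ℝ) = 0) ∧
      -- uniqueness
      (∀ ψ : ℝ → ℝ,
        (ContDiffOn ℝ (⊤ : ℕ∞) ψ (Set.Ioo A B) ∧ ψ 0 = φ₀ ∧ deriv ψ 0 = d ∧
          ∀ t ∈ Set.Ioo A B,
            2 * deriv (Xfun x₀ a) t * deriv ψ t
              = ((2 * (m : ℝ) - 1) * (deriv (Xfun x₀ a) t) ^ 2 + 1) * ψ t
                + 2 * Real.exp (-(Xfun x₀ a t)) - 2 * (m : ℝ)) →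
        ∀ t ∈ Set.Ioo A B, ψ t = φ t) := by
  have hc4 : ∀ t, 4 * uu a t ^ 2 = Theta a t ^ 2 - (1 - a^2) := by
    intro t; have := theta_sq a t; linarith
  rcases eq_or_ne (1 - a^2) 0 with hc | hc
  · -- degenerate case a² = 1
    obtain ⟨κ, hκE⟩ : ∃ κ : ℝ, κ * ((m:ℝ)+1) = Real.exp (-x₀) := by
      refine ⟨Real.exp (-x₀) / ((m:ℝ)+1), ?_⟩
      field_simp
    apply build m hm x₀ φ₀ a d hinit A B hA hB hΘ
      (fun t => 1 - κ * (Theta a t^2)⁻¹)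
      (fun t => κ * (2*Theta a t*uu a t) / (Theta a t^2)^2)
    · exact contDiffOn_const.sub (contDiffOn_const.mul
        (((theta_contDiff a).pow 2).contDiffOn.inv (fun t ht => pow_ne_zero 2 (hΘ t ht))))
    · apply ContDiffOn.div
      · exact contDiffOn_const.mul
          ((contDiff_const.mul (theta_contDiff a)).contDiffOn.mul (uu_contDiff a).contDiffOn)
      · exact (((theta_contDiff a).pow 2).pow 2).contDiffOn
      · exact fun t ht => pow_ne_zero 2 (pow_ne_zero 2 (hΘ t ht))
    · intro t ht
      have hθ := hΘ t ht
      have hsq : HasDerivAt (fun s => Theta a s ^ 2) (2 * Theta a t ^ 1 * uu a t) t :=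
        (theta_hasDeriv a t).pow 2
      have hinv := hsq.inv (pow_ne_zero 2 hθ)
      have h := (hinv.const_mul κ).const_sub 1
      refine h.congr_deriv ?_
      field_simp
      try ring
    · intro t ht
      have hθ := hΘ t ht
      have h4 : 4 * uu a t ^ 2 = Theta a t ^ 2 := by
        have h := hc4 t
        rw [hc] at h
        linarith
      field_simp
      linear_combination (κ*(2*(m:ℝ)+1) - (2*(m:ℝ)-1)*Theta a t^2) * h4
        + 2*Theta a t^2 * hκE
  · -- generic case
    have hγ : (2*(m:ℝ)-1) * bb m * (1-a^2)^(m+1) ≠ 0 := by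
      have h1 : (2*(m:ℝ)-1) ≠ 0 := by
        have : (2:ℝ) ≤ (m:ℝ) := by exact_mod_cast hm
        intro h; nlinarith
      exact mul_ne_zero (mul_ne_zero h1 (bb_ne m)) (pow_ne_zero _ hc)
    obtain ⟨μ, hμγ⟩ : ∃ μ : ℝ, μ * ((2*(m:ℝ)-1) * bb m * (1-a^2)^(m+1))
        = 2*Real.exp (-x₀) - (2*(m:ℝ)-1)*(1-a^2) := by
      refine ⟨(2*Real.exp (-x₀) - (2*(m:ℝ)-1)*(1-a^2)) / ((2*(m:ℝ)-1) * bb m * (1-a^2)^(m+1)), ?_⟩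
      exact div_mul_cancel₀ _ hγ
    apply build m hm x₀ φ₀ a d hinit A B hA hB hΘ
      (fun t => 1 + μ * HH a m t) (fun t => μ * HHd a m t)
    · exact contDiffOn_const.add (contDiffOn_const.mul (HH_contDiff a m).contDiffOn)
    · exact contDiffOn_const.mul (HHd_contDiff a m).contDiffOn
    · intro t ht
      exact ((HH_hasDeriv a m t).const_mul μ).const_add 1
    · intro t ht
      have hθ := hΘ t ht
      have key := HH_key a hm t
      have h4 := hc4 t
      field_simp
      linear_combination μ * key + hμγ
        - (2*(m:ℝ)-1) * h4
end

section
/- Let m ≥ 2 be an integer, let x₀, a be real numbers, set Θ(t) = cosh(t/2) + a·sinh(t/2) and x(t) = x₀ + 2·log|Θ(t)| on an open interval where Θ ≠ 0, and define G(t) = 2·(Θ(t)^{2m−1}·Θ̇(t))^{−1} and F(t) = (Θ(t)^m·Θ̇(t))^{−2}·(e^{−x₀} − m·Θ(t)²). Then, at every point t with Θ(t)·Θ̇(t) ≠ 0, a smooth function φ satisfies the equation 2ẋφ̇ = [(2m−1)ẋ² + 1]·φ + 2e^{−x} − 2m (equation (txf)) if and only if (G·φ)˙(t) = F(t). -/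
/-- G(t) = 2·(Θ^{2m−1}·Θ̇)⁻¹. -/
noncomputable def Gfun (m : ℕ) (a t : ℝ) : ℝ :=
  2 * (Theta a t ^ (2 * m - 1) * deriv (Theta a) t)⁻¹

/-- F(t) = (Θ^m·Θ̇)⁻²·(e^{−x₀} − m·Θ²). -/
noncomputable def Ffun (m : ℕ) (x₀ a t : ℝ) : ℝ :=
  ((Theta a t ^ m * deriv (Theta a) t)⁻¹) ^ 2
    * (Real.exp (-x₀) - (m : ℝ) * Theta a t ^ 2)

lemma aux_iff {x y u v k : ℝ} (hk : k ≠ 0) (h : x - y = k * (u - v)) :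
    x = y ↔ u = v := by
  constructor
  · intro e
    have h0 : k * (u - v) = 0 := by rw [← h, e, sub_self]
    have := (mul_eq_zero.mp h0).resolve_left hk
    linarith
  · intro e
    have : x - y = 0 := by rw [h, e, sub_self, mul_zero]
    linarith

/-- at every point with Θ·Θ̇ ≠ 0, a smooth φ satisfies the linear
equation (txf) if and only if (G·φ)˙ = F. -/
theorem stmt_7 (m : ℕ) (hm : 2 ≤ m) (x₀ a : ℝ) (A B : ℝ) (hAB : A < B)
    (hΘ : ∀ t ∈ Set.Ioo A B, Theta a t ≠ 0)
    (φ : ℝ → ℝ) (hφ : ContDiffOn ℝ (⊤ : ℕ∞) φ (Set.Ioo A B)) :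
    ∀ t ∈ Set.Ioo A B, Theta a t * deriv (Theta a) t ≠ 0 →
      (2 * deriv (Xfun x₀ a) t * deriv φ t
          = ((2 * (m : ℝ) - 1) * (deriv (Xfun x₀ a) t) ^ 2 + 1) * φ t
            + 2 * Real.exp (-(Xfun x₀ a t)) - 2 * (m : ℝ)
        ↔ deriv (fun s => Gfun m a s * φ s) t = Ffun m x₀ a t) := by
  obtain ⟨n, rfl⟩ : ∃ n, m = n + 2 := ⟨m - 2, by omega⟩
  intro t ht hne
  have hT : Theta a t ≠ 0 := left_ne_zero_of_mul hne
  have hD : deriv (Theta a) t ≠ 0 := right_ne_zero_of_mul hne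
  -- derivative of Theta
  have hΘd : ∀ s : ℝ, HasDerivAt (Theta a)
      ((Real.sinh (s / 2) + a * Real.cosh (s / 2)) / 2) s := by
    intro s
    have h1 : HasDerivAt (fun u : ℝ => u / 2) (1 / 2) s := (hasDerivAt_id s).div_const 2
    have h2 := (Real.hasDerivAt_cosh (s / 2)).comp s h1
    have h3 := ((Real.hasDerivAt_sinh (s / 2)).comp s h1).const_mul a
    have := h2.add h3
    exact this.congr_deriv (by ring)
  have hDeq : deriv (Theta a) = fun s => (Real.sinh (s / 2) + a * Real.cosh (s / 2)) / 2 :=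
    funext fun s => (hΘd s).deriv
  -- second derivative of Theta
  have hDd : ∀ s : ℝ, HasDerivAt (fun u => (Real.sinh (u / 2) + a * Real.cosh (u / 2)) / 2)
      (Theta a s / 4) s := by
    intro s
    have h1 : HasDerivAt (fun u : ℝ => u / 2) (1 / 2) s := (hasDerivAt_id s).div_const 2
    have h2 := (Real.hasDerivAt_sinh (s / 2)).comp s h1
    have h3 := ((Real.hasDerivAt_cosh (s / 2)).comp s h1).const_mul a
    have := (h2.add h3).div_const 2
    exact this.congr_deriv (by simp only [Theta]; ring)
  -- derivative of Xfun
  have hX' : deriv (Xfun x₀ a) t = 2 * (deriv (Theta a) t / Theta a t) := by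
    have hXeq : Xfun x₀ a = fun s => x₀ + 2 * Real.log (Theta a s) := by
      funext s; simp [Xfun, Real.log_abs]
    rw [hXeq, ((((hΘd t).log hT).const_mul 2).const_add x₀).deriv, hDeq]
  -- exponential
  have hexp : Real.exp (-(Xfun x₀ a t)) = Real.exp (-x₀) / Theta a t ^ 2 := by
    have h2 : Real.exp (2 * Real.log |Theta a t|) = Theta a t ^ 2 := by
      rw [show (2 : ℝ) * Real.log |Theta a t| = Real.log (|Theta a t| ^ 2) by
            rw [Real.log_pow]; push_cast; ring]
      rw [Real.exp_log (pow_pos (abs_pos.mpr hT) 2), sq_abs]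
    rw [Xfun, neg_add, Real.exp_add, Real.exp_neg (2 * Real.log |Theta a t|), h2,
      div_eq_mul_inv]
  -- derivative of φ
  have hφd : HasDerivAt φ (deriv φ t) t :=
    ((hφ.contDiffAt (isOpen_Ioo.mem_nhds ht)).differentiableAt (by simp)).hasDerivAt
  -- derivative of G·φ
  have hf : HasDerivAt (fun s => Theta a s ^ (2 * (n + 2) - 1) * deriv (Theta a) s)
      ((2 * n + 3 : ℝ) * Theta a t ^ (2 * n + 2) * deriv (Theta a) t * deriv (Theta a) t
        + Theta a t ^ (2 * n + 3) * (Theta a t / 4)) t := by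
    rw [hDeq]
    have := ((hΘd t).pow (2 * (n + 2) - 1)).mul (hDd t)
    exact this.congr_deriv (by
      simp [show 2 * (n + 2) - 1 = 2 * n + 3 from by omega,
        show 2 * (n + 2) - 1 - 1 = 2 * n + 2 from by omega] <;> push_cast <;> ring)
  have hfne : Theta a t ^ (2 * (n + 2) - 1) * deriv (Theta a) t ≠ 0 :=
    mul_ne_zero (pow_ne_zero _ hT) hD
  have hG := ((hf.inv hfne).const_mul 2).mul hφd
  have hkey : deriv (fun s => Gfun (n + 2) a s * φ s) t =
      2 * (-((2 * n + 3 : ℝ) * Theta a t ^ (2 * n + 2) * deriv (Theta a) t * deriv (Theta a) t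
            + Theta a t ^ (2 * n + 3) * (Theta a t / 4))
          / (Theta a t ^ (2 * (n + 2) - 1) * deriv (Theta a) t) ^ 2) * φ t
        + 2 * (Theta a t ^ (2 * (n + 2) - 1) * deriv (Theta a) t)⁻¹ * deriv φ t := by
    simp only [Gfun]
    exact hG.deriv
  rw [hX', hexp, hkey, Ffun]
  simp only [show 2 * (n + 2) - 1 = 2 * n + 3 from by omega]
  push_cast
  refine aux_iff (k := 2 * Theta a t ^ (2 * n + 2) * deriv (Theta a) t ^ 2)
    (mul_ne_zero (mul_ne_zero two_ne_zero (pow_ne_zero _ hT)) (pow_ne_zero _ hD)) ?_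
  field_simp
  ring
end

section
/- Let m ≥ 2 be an integer and let (x, y, φ) be a smooth solution of the system (xdd) together with equation (int) on an open interval I containing 0, such that σ(t) = e^{(x(t)−y(t)+t)/2} is constant on I. Then the initial data satisfy (cnd): ẏ(0) − ẋ(0) = 1, (1 − m·e^{x(0)−y(0)})·ẏ(0) = y(0), and φ̇(0) = [(m−1)·ẏ(0) − m]·φ(0) + m − e^{y(0)−x(0)}; moreover x(t) = x(0) − t + ẏ(0)·(e^t − 1) and y(t) = y(0) + ẏ(0)·(e^t − 1) on I, and φ satisfies the first-order linear equation (dfe): φ̇ = [(m−1)·ẏ(0)·e^t − m]·φ + m − e^{y(0)−x(0)+t} on I. -/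
lemma my_const_of_deriv_zero {s : Set ℝ} (hs : IsOpen s) (hconv : Convex ℝ s)
    {f : ℝ → ℝ} (hf : ∀ t ∈ s, HasDerivAt f 0 t)
    {a b : ℝ} (ha : a ∈ s) (hb : b ∈ s) : f a = f b := by
  apply hconv.is_const_of_fderivWithin_eq_zero
    (fun t ht => ((hf t ht).differentiableAt).differentiableWithinAt) _ ha hb
  intro t ht
  rw [fderivWithin_of_isOpen hs ht, (hf t ht).hasFDerivAt.fderiv]; ext; simp

/-- for a solution of (xdd) -- (int) on an open interval
containing 0 such that σ = e^{(x−y+t)/2} is constant, the initial data satisfy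
(cnd), x and y are given by the explicit formulae (xex), and φ satisfies the
linear equation (dfe). -/
theorem stmt_8 (m : ℕ) (hm : 2 ≤ m) (A B : ℝ) (hA : A < 0) (hB : 0 < B)
    (x y φ : ℝ → ℝ)
    (hx : ContDiffOn ℝ (⊤ : ℕ∞) x (Set.Ioo A B))
    (hy : ContDiffOn ℝ (⊤ : ℕ∞) y (Set.Ioo A B))
    (hφ : ContDiffOn ℝ (⊤ : ℕ∞) φ (Set.Ioo A B))
    (hxdd₁ : ∀ t ∈ Set.Ioo A B,
      2 * deriv (deriv x) t = (deriv y t) ^ 2 - (deriv x t) ^ 2 + 1)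
    (hxdd₂ : ∀ t ∈ Set.Ioo A B,
      φ t * deriv (deriv y) t
        = ((m : ℝ) - 1) * φ t * deriv x t * deriv y t
          - deriv φ t * deriv y t - y t * Real.exp (y t - x t))
    (hxdd₃ : ∀ t ∈ Set.Ioo A B,
      deriv (deriv φ) t
        = ((m : ℝ) - 1) * deriv x t * deriv φ t + (m : ℝ) * φ t - (m : ℝ))
    (hint : ∀ t ∈ Set.Ioo A B,
      2 * deriv x t * deriv φ t
        - (2 * (m : ℝ) - 1) * φ t * (deriv x t) ^ 2
        + φ t * (deriv y t) ^ 2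
        + 2 * (y t - 1) * Real.exp (y t - x t)
        - φ t + 2 * (m : ℝ) = 0)
    (hσ : ∀ t ∈ Set.Ioo A B,
      Real.exp ((x t - y t + t) / 2) = Real.exp ((x 0 - y 0 + 0) / 2)) :
    -- (cnd)
    deriv y 0 - deriv x 0 = 1 ∧
    (1 - (m : ℝ) * Real.exp (x 0 - y 0)) * deriv y 0 = y 0 ∧
    deriv φ 0
      = (((m : ℝ) - 1) * deriv y 0 - (m : ℝ)) * φ 0 + (m : ℝ)
        - Real.exp (y 0 - x 0) ∧
    -- (xex)
    (∀ t ∈ Set.Ioo A B,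
      x t = x 0 - t + deriv y 0 * (Real.exp t - 1) ∧
      y t = y 0 + deriv y 0 * (Real.exp t - 1)) ∧
    -- (dfe)
    (∀ t ∈ Set.Ioo A B,
      deriv φ t
        = (((m : ℝ) - 1) * deriv y 0 * Real.exp t - (m : ℝ)) * φ t + (m : ℝ)
          - Real.exp (y 0 - x 0 + t)) := by
  set I := Set.Ioo A B with hIdef
  have hI : IsOpen I := isOpen_Ioo
  have hconv : Convex ℝ I := convex_Ioo A B
  have h0 : (0 : ℝ) ∈ I := ⟨hA, hB⟩
  -- x - y + t is constant
  have hxy : ∀ t ∈ I, x t - y t + t = x 0 - y 0 := by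
    intro t ht
    have := Real.exp_injective (hσ t ht)
    linarith
  -- differentiability
  have hx1 : ∀ t ∈ I, DifferentiableAt ℝ x t := fun t ht =>
    (hx.contDiffAt (hI.mem_nhds ht)).differentiableAt (by simp)
  have hy1 : ∀ t ∈ I, DifferentiableAt ℝ y t := fun t ht =>
    (hy.contDiffAt (hI.mem_nhds ht)).differentiableAt (by simp)
  have hdy : ContDiffOn ℝ (⊤ : ℕ∞) (deriv y) I := hy.deriv_of_isOpen hI (by simp)
  have hdy1 : ∀ t ∈ I, DifferentiableAt ℝ (deriv y) t := fun t ht =>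
    (hdy.contDiffAt (hI.mem_nhds ht)).differentiableAt (by simp)
  -- deriv x = deriv y - 1 on I
  have hdxy : ∀ t ∈ I, deriv x t = deriv y t - 1 := by
    intro t ht
    have heq : (fun s => x s - y s + s) =ᶠ[nhds t] fun _ => x 0 - y 0 :=
      Filter.eventuallyEq_of_mem (hI.mem_nhds ht) (fun s hs => hxy s hs)
    have h1 : deriv (fun s => x s - y s + s) t = 0 := by
      rw [heq.deriv_eq]; exact deriv_const t _
    have h2 : deriv (fun s => x s - y s + s) t = deriv x t - deriv y t + 1 := by
      rw [deriv_fun_add ((hx1 t ht).fun_sub (hy1 t ht)) differentiableAt_fun_id,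
        deriv_fun_sub (hx1 t ht) (hy1 t ht), deriv_id'']
    rw [h2] at h1; linarith
  -- second derivatives equal
  have hddxy : ∀ t ∈ I, deriv (deriv x) t = deriv (deriv y) t := by
    intro t ht
    have heq : deriv x =ᶠ[nhds t] fun s => deriv y s - 1 :=
      Filter.eventuallyEq_of_mem (hI.mem_nhds ht) (fun s hs => hdxy s hs)
    rw [heq.deriv_eq, deriv_sub_const]
  -- ODE: deriv (deriv y) = deriv y on I
  have hode : ∀ t ∈ I, deriv (deriv y) t = deriv y t := by
    intro t ht
    have h1 := hxdd₁ t ht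
    rw [hddxy t ht, hdxy t ht] at h1
    nlinarith [h1]
  -- deriv y t = deriv y 0 * exp t
  have hdyex : ∀ t ∈ I, deriv y t = deriv y 0 * Real.exp t := by
    intro t ht
    have hu : ∀ s ∈ I, HasDerivAt (fun r => deriv y r * Real.exp (-r)) 0 s := by
      intro s hs
      have h1 : HasDerivAt (deriv y) (deriv y s) s := by
        have := (hdy1 s hs).hasDerivAt
        rwa [hode s hs] at this
      have h2 : HasDerivAt (fun r => Real.exp (-r)) (Real.exp (-s) * (-1)) s :=
        (hasDerivAt_neg' s).exp
      have := h1.fun_mul h2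
      exact this.congr_deriv (by ring)
    have := my_const_of_deriv_zero hI hconv hu ht h0
    simp only [neg_zero, Real.exp_zero, mul_one] at this
    have hpos : Real.exp (-t) ≠ 0 := (Real.exp_pos _).ne'
    have : deriv y t = deriv y 0 / Real.exp (-t) := by
      field_simp at this ⊢; linarith
    rw [this, Real.exp_neg]; field_simp
  -- y explicit
  have hyex : ∀ t ∈ I, y t = y 0 + deriv y 0 * (Real.exp t - 1) := by
    intro t ht
    have hv : ∀ s ∈ I, HasDerivAt (fun r => y r - deriv y 0 * Real.exp r) 0 s := by
      intro s hs
      have h1 : HasDerivAt y (deriv y s) s := (hy1 s hs).hasDerivAt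
      have h2 : HasDerivAt (fun r => deriv y 0 * Real.exp r) (deriv y 0 * Real.exp s) s :=
        (Real.hasDerivAt_exp s).const_mul _
      have := h1.fun_sub h2
      rw [hdyex s hs] at this
      simpa using this
    have := my_const_of_deriv_zero hI hconv hv ht h0
    simp only [Real.exp_zero] at this
    linarith
  -- x explicit
  have hxex : ∀ t ∈ I, x t = x 0 - t + deriv y 0 * (Real.exp t - 1) := by
    intro t ht
    have h1 := hxy t ht
    have h2 := hyex t ht
    linarith
  -- y - x relation
  have hyx : ∀ t ∈ I, y t - x t = y 0 - x 0 + t := by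
    intro t ht; have := hxy t ht; linarith
  -- dfe on I
  have hdfe : ∀ t ∈ I, deriv φ t
      = (((m : ℝ) - 1) * deriv y 0 * Real.exp t - (m : ℝ)) * φ t + (m : ℝ)
        - Real.exp (y 0 - x 0 + t) := by
    intro t ht
    have hA0 := hxdd₂ t ht
    have hB0 := hint t ht
    rw [hode t ht, hdxy t ht] at hA0
    rw [hdxy t ht] at hB0
    have hE : Real.exp (y t - x t) = Real.exp (y 0 - x 0 + t) := by rw [hyx t ht]
    rw [hE] at hA0 hB0
    linear_combination hA0 - hB0 / 2 + ((m:ℝ)-1) * φ t * (hdyex t ht)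
  refine ⟨by have := hdxy 0 h0; linarith, ?_, ?_, fun t ht => ⟨hxex t ht, hyex t ht⟩, hdfe⟩
  · -- cnd₂
    have hA0 := hxdd₂ 0 h0
    rw [hode 0 h0, hdxy 0 h0] at hA0
    have hd := hdfe 0 h0
    simp only [Real.exp_zero, mul_one, add_zero] at hd
    have hE0 : Real.exp (x 0 - y 0) = (Real.exp (y 0 - x 0))⁻¹ := by
      rw [← Real.exp_neg]; ring_nf
    rw [hE0]
    have hne : Real.exp (y 0 - x 0) ≠ 0 := (Real.exp_pos _).ne'
    field_simp
    linear_combination (deriv y 0) * hd - hA0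
  · -- cnd₃
    have := hdfe 0 h0
    simpa using this
end

section
/- Let m ≥ 2 be an integer and let real numbers x₀, y₀, φ₀, b satisfy (1 − m·e^{x₀−y₀})·b = y₀. Define x(t) = x₀ − t + b·(e^t − 1) and y(t) = y₀ + b·(e^t − 1) for t ∈ ℝ, and let φ : ℝ → ℝ be the unique smooth solution of the first-order linear equation φ̇ = [(m−1)·b·e^t − m]·φ + m − e^{y₀−x₀+t} with φ(0) = φ₀. Then the triple (x, y, φ) is a smooth solution of the system (xdd) together with equation (int) on all of ℝ, and the function σ(t) = e^{(x(t)−y(t)+t)/2} is constant. -/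
/-- x(t) = x₀ − t + b·(e^t − 1). -/
noncomputable def Xlin (x₀ b t : ℝ) : ℝ := x₀ - t + b * (Real.exp t - 1)

/-- y(t) = y₀ + b·(e^t − 1). -/
noncomputable def Ylin (y₀ b t : ℝ) : ℝ := y₀ + b * (Real.exp t - 1)

lemma xlin_hasDeriv (x₀ b t : ℝ) :
    HasDerivAt (Xlin x₀ b) (b * Real.exp t - 1) t := by
  have h := ((hasDerivAt_id t).const_sub x₀).add
    (((Real.hasDerivAt_exp t).sub_const 1).const_mul b)
  exact h.congr_deriv (by ring)

lemma ylin_hasDeriv (y₀ b t : ℝ) :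
    HasDerivAt (Ylin y₀ b) (b * Real.exp t) t := by
  have h := (hasDerivAt_const t y₀).add
    (((Real.hasDerivAt_exp t).sub_const 1).const_mul b)
  exact h.congr_deriv (by ring)

lemma xlin_deriv (x₀ b : ℝ) :
    deriv (Xlin x₀ b) = fun t => b * Real.exp t - 1 :=
  funext fun t => (xlin_hasDeriv x₀ b t).deriv

lemma ylin_deriv (y₀ b : ℝ) :
    deriv (Ylin y₀ b) = fun t => b * Real.exp t :=
  funext fun t => (ylin_hasDeriv y₀ b t).deriv

lemma xlin_deriv2 (x₀ b t : ℝ) :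
    deriv (deriv (Xlin x₀ b)) t = b * Real.exp t := by
  rw [xlin_deriv]
  exact (((Real.hasDerivAt_exp t).const_mul b).sub_const 1).deriv

lemma ylin_deriv2 (y₀ b t : ℝ) :
    deriv (deriv (Ylin y₀ b)) t = b * Real.exp t := by
  rw [ylin_deriv]
  exact ((Real.hasDerivAt_exp t).const_mul b).deriv

/-- for initial data with (1 − m·e^{x₀−y₀})·b = y₀, the explicit
x, y together with the solution φ of the linear equation (dfe) form a smooth
solution of (xdd) -- (int) on all of ℝ, with σ = e^{(x−y+t)/2} constant. -/
theorem stmt_9 (m : ℕ) (hm : 2 ≤ m) (x₀ y₀ φ₀ b : ℝ)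
    (hb : (1 - (m : ℝ) * Real.exp (x₀ - y₀)) * b = y₀)
    (φ : ℝ → ℝ) (hφ : ContDiff ℝ (⊤ : ℕ∞) φ) (hφ0 : φ 0 = φ₀)
    (hode : ∀ t : ℝ,
      deriv φ t
        = (((m : ℝ) - 1) * b * Real.exp t - (m : ℝ)) * φ t + (m : ℝ)
          - Real.exp (y₀ - x₀ + t)) :
    -- (xdd.i)
    (∀ t : ℝ,
      2 * deriv (deriv (Xlin x₀ b)) t
        = (deriv (Ylin y₀ b) t) ^ 2 - (deriv (Xlin x₀ b) t) ^ 2 + 1) ∧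
    -- (xdd.ii)
    (∀ t : ℝ,
      φ t * deriv (deriv (Ylin y₀ b)) t
        = ((m : ℝ) - 1) * φ t * deriv (Xlin x₀ b) t * deriv (Ylin y₀ b) t
          - deriv φ t * deriv (Ylin y₀ b) t
          - Ylin y₀ b t * Real.exp (Ylin y₀ b t - Xlin x₀ b t)) ∧
    -- (xdd.iii)
    (∀ t : ℝ,
      deriv (deriv φ) t
        = ((m : ℝ) - 1) * deriv (Xlin x₀ b) t * deriv φ t
          + (m : ℝ) * φ t - (m : ℝ)) ∧
    -- (int)
    (∀ t : ℝ,
      2 * deriv (Xlin x₀ b) t * deriv φ t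
        - (2 * (m : ℝ) - 1) * φ t * (deriv (Xlin x₀ b) t) ^ 2
        + φ t * (deriv (Ylin y₀ b) t) ^ 2
        + 2 * (Ylin y₀ b t - 1) * Real.exp (Ylin y₀ b t - Xlin x₀ b t)
        - φ t + 2 * (m : ℝ) = 0) ∧
    -- σ is constant
    (∀ t : ℝ,
      Real.exp ((Xlin x₀ b t - Ylin y₀ b t + t) / 2)
        = Real.exp ((Xlin x₀ b 0 - Ylin y₀ b 0 + 0) / 2)) := by
  have h1 : b - y₀ = (m : ℝ) * Real.exp (x₀ - y₀) * b := by linear_combination hb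
  have hEF : ∀ t : ℝ,
      Real.exp (x₀ - y₀) * Real.exp (y₀ - x₀ + t) = Real.exp t := by
    intro t
    rw [← Real.exp_add]
    ring_nf
  have harg : ∀ t : ℝ, Ylin y₀ b t - Xlin x₀ b t = y₀ - x₀ + t := by
    intro t
    simp only [Xlin, Ylin]
    ring
  refine ⟨?_, ?_, ?_, ?_, ?_⟩
  · intro t
    rw [xlin_deriv2, xlin_deriv, ylin_deriv]
    ring
  · intro t
    rw [ylin_deriv2, xlin_deriv, ylin_deriv, harg t]
    simp only [Ylin]
    rw [hode t]
    linear_combination (-Real.exp (y₀ - x₀ + t)) * h1 - (m : ℝ) * b * hEF t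
  · intro t
    have hφd : deriv φ = fun s =>
        (((m : ℝ) - 1) * b * Real.exp s - (m : ℝ)) * φ s + (m : ℝ)
          - Real.exp (y₀ - x₀ + s) := funext hode
    have hA : HasDerivAt (fun s => (((m : ℝ) - 1) * b * Real.exp s - (m : ℝ)))
        (((m : ℝ) - 1) * b * Real.exp t) t := by
      simpa using ((Real.hasDerivAt_exp t).const_mul (((m : ℝ) - 1) * b)).sub_const (m : ℝ)
    have hB : HasDerivAt φ (deriv φ t) t :=
      (hφ.differentiable (by simp) t).hasDerivAt
    have hC : HasDerivAt (fun s => Real.exp (y₀ - x₀ + s))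
        (Real.exp (y₀ - x₀ + t)) t := by
      simpa using (((hasDerivAt_id t).const_add (y₀ - x₀)).exp)
    have hD : HasDerivAt (fun s =>
        (((m : ℝ) - 1) * b * Real.exp s - (m : ℝ)) * φ s + (m : ℝ)
          - Real.exp (y₀ - x₀ + s))
        (((m : ℝ) - 1) * b * Real.exp t * φ t
          + (((m : ℝ) - 1) * b * Real.exp t - (m : ℝ)) * deriv φ t
          - Real.exp (y₀ - x₀ + t)) t :=
      ((hA.mul hB).add_const (m : ℝ)).sub hC
    have hD2 : deriv (deriv φ) t
        = ((m : ℝ) - 1) * b * Real.exp t * φ t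
          + (((m : ℝ) - 1) * b * Real.exp t - (m : ℝ)) * deriv φ t
          - Real.exp (y₀ - x₀ + t) := by
      conv_lhs => rw [hφd]
      exact hD.deriv
    rw [hD2, xlin_deriv]
    linear_combination (-1 : ℝ) * hode t
  · intro t
    rw [xlin_deriv, ylin_deriv, harg t]
    simp only [Ylin]
    rw [hode t]
    linear_combination -2 * Real.exp (y₀ - x₀ + t) * h1 - 2 * (m : ℝ) * b * hEF t
  · intro t
    congr 1
    simp only [Xlin, Ylin]
    ring
end

section
/- Let m > k ≥ 1 be integers, set Q = (m+k)/(m−k), and define S(a) = ∫₀^Q [τ^{m−1} + (k−m)·τ^m]·e^{−aτ} dτ for real a. Then S(0) < 0, and S(a) > 0 for every real a ≥ m·(m−k). -/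
/-!
Splitting off the exact derivative `(τ^m e^{-aτ})' = (m τ^(m-1) - a τ^m) e^{-aτ}` gives
`S(a) = Q^m e^{-aQ}/m + (a/m + k - m) ∫₀^Q τ^m e^{-aτ} dτ`.
For `a ≥ m(m-k)` both terms are nonnegative and the first is positive. For `a = 0` the integral
is `Q^(m+1)/(m+1)`, and `(m-k) Q = m+k` turns `S(0)` into `Q^m (1/m - (m+k)/(m+1)) < 0`.
-/

/-- S(a) = ∫₀^Q [τ^{m−1} + (k−m)τ^m] e^{−aτ} dτ, with Q = (m+k)/(m−k). -/
noncomputable def Sint (m k : ℕ) (a : ℝ) : ℝ :=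
  ∫ τ in (0 : ℝ)..(((m : ℝ) + (k : ℝ)) / ((m : ℝ) - (k : ℝ))),
    (τ ^ (m - 1) + ((k : ℝ) - (m : ℝ)) * τ ^ m) * Real.exp (-a * τ)

open Real intervalIntegral

theorem hasDerivAt_pow_mul_exp_neg_mul (n : ℕ) (a τ : ℝ) :
    HasDerivAt (fun τ : ℝ => τ ^ n * exp (-a * τ))
      ((n * τ ^ (n - 1) - a * τ ^ n) * exp (-a * τ)) τ := by
  have h : HasDerivAt (fun τ : ℝ => τ ^ n * exp (-a * τ))
      (n * τ ^ (n - 1) * exp (-a * τ) + τ ^ n * (exp (-a * τ) * (-a))) τ :=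
    (hasDerivAt_pow n τ).mul (by simpa using ((hasDerivAt_id τ).const_mul (-a)).exp)
  exact h.congr_deriv (by ring)

theorem integral_deriv_pow_mul_exp_neg_mul {n : ℕ} (hn : n ≠ 0) (a b : ℝ) :
    ∫ τ in (0 : ℝ)..b, (n * τ ^ (n - 1) - a * τ ^ n) * exp (-a * τ) = b ^ n * exp (-a * b) := by
  rw [integral_eq_sub_of_hasDerivAt (fun τ _ => hasDerivAt_pow_mul_exp_neg_mul n a τ)
    (Continuous.intervalIntegrable (by fun_prop) _ _)]
  simp [zero_pow hn]

theorem integral_pow_add_mul_pow_mul_exp_neg_mul {n : ℕ} (hn : n ≠ 0) (a b c : ℝ) :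
    ∫ τ in (0 : ℝ)..b, (τ ^ (n - 1) + c * τ ^ n) * exp (-a * τ) =
      b ^ n * exp (-a * b) / n + (a / n + c) * ∫ τ in (0 : ℝ)..b, τ ^ n * exp (-a * τ) := by
  have hn' : (n : ℝ) ≠ 0 := Nat.cast_ne_zero.mpr hn
  have hsplit : (fun τ : ℝ => (τ ^ (n - 1) + c * τ ^ n) * exp (-a * τ)) = fun τ =>
      (n : ℝ)⁻¹ * ((n * τ ^ (n - 1) - a * τ ^ n) * exp (-a * τ))
        + (a / n + c) * (τ ^ n * exp (-a * τ)) := by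
    funext τ
    field_simp
    ring
  rw [hsplit, integral_add (Continuous.intervalIntegrable (by fun_prop) _ _)
      (Continuous.intervalIntegrable (by fun_prop) _ _),
    integral_const_mul, integral_const_mul, integral_deriv_pow_mul_exp_neg_mul hn]
  ring

section Sint

variable {m k : ℕ}

theorem Sint_eq (hm : m ≠ 0) (a : ℝ) :
    Sint m k a = ((m + k) / (m - k) : ℝ) ^ m * exp (-a * ((m + k) / (m - k))) / m
      + (a / m + (k - m)) * ∫ τ in (0 : ℝ)..(m + k) / (m - k), τ ^ m * exp (-a * τ) :=
  integral_pow_add_mul_pow_mul_exp_neg_mul hm a _ _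

theorem Sint_zero_neg (hk : 1 ≤ k) (hkm : k < m) : Sint m k 0 < 0 := by
  have hkR : (1 : ℝ) ≤ k := by exact_mod_cast hk
  have hmR : (k : ℝ) + 1 ≤ m := by exact_mod_cast hkm
  set Q : ℝ := (m + k) / (m - k) with hQ
  have hQpos : 0 < Q := div_pos (by linarith) (by linarith)
  have hQm : ((m : ℝ) - k) * Q = m + k := mul_div_cancel₀ _ (by linarith)
  have hS : Sint m k 0 = Q ^ m * (1 / m - (m + k) / (m + 1)) := by
    rw [Sint_eq (by omega)]
    simp only [neg_zero, zero_mul, exp_zero, mul_one, zero_div, zero_add, integral_pow,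
      zero_pow (Nat.succ_ne_zero m), sub_zero, ← hQ]
    field_simp
    linear_combination (-Q ^ m) * hQm
  rw [hS]
  refine mul_neg_of_pos_of_neg (pow_pos hQpos m) ?_
  rw [sub_neg, div_lt_div_iff₀ (by linarith) (by linarith)]
  nlinarith

theorem Sint_pos (hkm : k < m) {a : ℝ} (ha : (m : ℝ) * (m - k) ≤ a) : 0 < Sint m k a := by
  have hmk : (k : ℝ) < m := by exact_mod_cast hkm
  have hm : (0 : ℝ) < m := by linarith [k.cast_nonneg (α := ℝ)]
  have hQpos : (0 : ℝ) < (m + k) / (m - k) := div_pos (by linarith) (by linarith)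
  have hcoeff : 0 ≤ a / m + (k - m) := by
    have : (m : ℝ) - k ≤ a / m := by
      rw [le_div_iff₀ hm]
      linarith
    linarith
  have hint : 0 ≤ ∫ τ in (0 : ℝ)..(m + k) / (m - k), τ ^ m * exp (-a * τ) :=
    integral_nonneg hQpos.le fun τ hτ => mul_nonneg (pow_nonneg hτ.1 m) (exp_pos _).le
  rw [Sint_eq (by omega)]
  have hboundary := div_pos (mul_pos (pow_pos hQpos m) (exp_pos (-a * ((m + k) / (m - k))))) hm
  linarith [mul_nonneg hcoeff hint]

end Sint

/-- S(0) < 0, and S(a) > 0 for every a ≥ m(m−k). -/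
theorem stmt_19 (m k : ℕ) (hk : 1 ≤ k) (hkm : k < m) :
    Sint m k 0 < 0 ∧
    ∀ a : ℝ, (m : ℝ) * ((m : ℝ) - (k : ℝ)) ≤ a → 0 < Sint m k a :=
  ⟨Sint_zero_neg hk hkm, fun _ ha => Sint_pos hkm ha⟩
end
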